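/- arXiv:1111.0483 — 7 statements merged into one kernel-verified Lean document; each statement's English description precedes it below -/
import Mathlib

section
/- Let E be an exponential family on X with normal space N, and let Y be a subset of X with ∅ ≠ Y ≠ X. If every circuit vector c ∈ N satisfies supp(c) ⊆ Y or supp(c) ⊆ X∖Y, then the topological closure of E (in ℝ^X) equals the set of all probability distributions of the form λ·P₁ + (1−λ)·P₂, where λ ∈ [0,1], P₁ lies in the closure of E and is supported on Y, and P₂ lies in the closure of E and is supported on X∖Y. -/
open scoped BigOperators Classical

noncomputable section

variable {X : Type*}

/-- A probability distribution on a finite set `X`. -/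
def IsProb [Fintype X] (P : X → ℝ) : Prop :=
  (∀ x, 0 ≤ P x) ∧ ∑ x, P x = 1

/-- Information divergence `D(P‖Q)` with values in `EReal`, equal to `⊤` if the
support of `P` is not contained in the support of `Q`.  (The convention
`0 · log 0 = 0` holds automatically since `Real.log 0 = 0`.) -/
def KL [Fintype X] (P Q : X → ℝ) : EReal :=
  if ∀ x, Q x = 0 → P x = 0 then ((∑ x, P x * Real.log (P x / Q x) : ℝ) : EReal) else ⊤

/-- The exponential family with strictly positive reference measure `ν` and extended
tangent space `T` (a subspace of `ℝ^X` containing the constants): the set of strictly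
positive probability distributions `P` with `log (P/ν) ∈ T`. -/
def expFam [Fintype X] (ν : X → ℝ) (T : Submodule ℝ (X → ℝ)) : Set (X → ℝ) :=
  {P | (∀ x, 0 < P x) ∧ ∑ x, P x = 1 ∧ (fun x => Real.log (P x / ν x)) ∈ T}

/-- `sup_P inf_{Q ∈ E} D(P‖Q)`, supremum over all probability distributions `P`. -/
def maxDiv [Fintype X] (E : Set (X → ℝ)) : EReal :=
  ⨆ P ∈ {P : X → ℝ | IsProb P}, ⨅ Q ∈ E, KL P Q

/-- The orthogonal complement of `T` in `ℝ^X` w.r.t. the standard inner product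
(the normal space of the exponential family with extended tangent space `T`). -/
def orthSpace [Fintype X] (T : Submodule ℝ (X → ℝ)) : Set (X → ℝ) :=
  {u | ∀ t ∈ T, ∑ x, u x * t x = 0}

/-- A circuit vector of a set `N ⊆ ℝ^X`: a nonzero element whose support is minimal,
i.e. every `u ∈ N` with `supp u ⊆ supp v` is a scalar multiple of `v`. -/
def IsCircuitVector (N : Set (X → ℝ)) (v : X → ℝ) : Prop :=
  v ∈ N ∧ v ≠ 0 ∧ ∀ u ∈ N, Function.support u ⊆ Function.support v → ∃ α : ℝ, u = α • v

/-- A circuit of `N`: the support of a circuit vector. -/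
def IsCircuit (N : Set (X → ℝ)) (σ : Set X) : Prop :=
  ∃ v, IsCircuitVector N v ∧ σ = Function.support v

/-- The closed partition model of the partition given by the equivalence relation `r`:
all probability distributions constant on each block. -/
def partModel [Fintype X] (r : X → X → Prop) : Set (X → ℝ) :=
  {Q | IsProb Q ∧ ∀ x y, r x y → Q x = Q y}

/-- The partition exponential family of the partition given by the equivalence
relation `r`: all strictly positive probability distributions constant on each block. -/
def partExpFam [Fintype X] (r : X → X → Prop) : Set (X → ℝ) :=
  {P | (∀ x, 0 < P x) ∧ ∑ x, P x = 1 ∧ ∀ x y, r x y → P x = P y}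

/-- The set `X̲` of points not annihilated by all of `N`. -/
def underlineSet (N : Set (X → ℝ)) : Set X := {x | ∃ v ∈ N, v x ≠ 0}

/-- The relation `x ∼ y` : every `v ∈ N` with `v x ≠ 0` has `v y ≠ 0`. -/
def coRel (N : Set (X → ℝ)) (x y : X) : Prop := ∀ v ∈ N, v x ≠ 0 → v y ≠ 0

/-- `Z` is an equivalence class of `∼` on `X̲`. -/
def IsClassOf (N : Set (X → ℝ)) (Z : Set X) : Prop :=
  ∃ x ∈ underlineSet N, Z = {y | coRel N x y}

end

/-!
Every vector of the normal space `N` is a linear combination of circuit vectors. Each circuit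
lies on one side of `Y`, so `N`, and with it `T = N^⊥`, is invariant under restriction to `Y`.
Hence log-densities can be glued along `Y`: for `Q, R ∈ E` and `μ ∈ (0,1)` the mixture
`μ Q(·|Y) + (1-μ) R(·|X∖Y)` again lies in `E`. This mixture depends continuously on `(μ, Q, R)`
wherever both conditionings are defined, so it stays in the closure for `μ ∈ [0,1]` and
`Q, R ∈ cl E`. That gives `⊇`, and with `μ = 1` it shows that `cl E` is closed under
conditioning on `Y` (and on `X∖Y`), which gives `⊆`.
-/

open Function Set

section Circuits

variable {X : Type*}

lemma support_sub_smul_subset_diff {a b : X → ℝ} {S : Set X} (ha : support a ⊆ S)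
    (hb : support b ⊆ S) {x : X} (hx : b x ≠ 0) :
    support (a - (a x / b x) • b) ⊆ S \ {x} := by
  intro y hy
  have hS : support (a - (a x / b x) • b) ⊆ S :=
    (support_sub a _).trans (union_subset ha ((support_const_smul_subset _ b).trans hb))
  refine ⟨hS hy, ?_⟩
  rintro rfl
  simp [hx] at hy

variable {N : Submodule ℝ (X → ℝ)}

lemma exists_add_of_not_isCircuitVector {u : X → ℝ} (hu : u ∈ N) (hu0 : u ≠ 0)
    (hc : ¬ IsCircuitVector N u) :
    ∃ v ∈ N, ∃ w ∈ N, v + w = u ∧ support v ⊂ support u ∧ support w ⊂ support u := by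
  simp only [IsCircuitVector, SetLike.mem_coe, not_and, not_forall, not_exists] at hc
  -- `w` is not a multiple of `u`; killing `w` at a point of `supp u` leaves a nonzero `w'` with
  -- smaller support, and killing `u` at a point of `supp w'` leaves the other summand.
  obtain ⟨w, hwN, hwu, hw⟩ := hc hu hu0
  obtain ⟨x, hx⟩ := Function.ne_iff.1 hu0
  set w' := w - (w x / u x) • u
  have hw'0 : w' ≠ 0 := fun h => hw (w x / u x) (sub_eq_zero.1 h)
  have hw' : support w' ⊆ support u \ {x} := support_sub_smul_subset_diff hwu subset_rfl hx
  obtain ⟨y, hy⟩ := Function.ne_iff.1 hw'0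
  have hyu : y ∈ support u := (hw' hy).1
  have hv : support (u - (u y / w' y) • w') ⊆ support u \ {y} :=
    support_sub_smul_subset_diff subset_rfl (hw'.trans sdiff_subset) hy
  have hw'N : w' ∈ N := N.sub_mem hwN (N.smul_mem _ hu)
  refine ⟨u - (u y / w' y) • w', N.sub_mem hu (N.smul_mem _ hw'N), (u y / w' y) • w',
    N.smul_mem _ hw'N, sub_add_cancel _ _, hv.trans_ssubset (sdiff_singleton_ssubset.2 hyu), ?_⟩
  exact ((support_const_smul_subset _ _).trans hw').trans_ssubset (sdiff_singleton_ssubset.2 hx)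

theorem mem_span_isCircuitVector [Finite X] {u : X → ℝ} (hu : u ∈ N) :
    u ∈ Submodule.span ℝ {c | IsCircuitVector N c} := by
  induction h : (support u).ncard using Nat.strong_induction_on generalizing u with
  | _ n ih =>
    by_cases hu0 : u = 0
    · exact hu0 ▸ Submodule.zero_mem _
    by_cases hc : IsCircuitVector N u
    · exact Submodule.subset_span hc
    obtain ⟨v, hv, w, hw, rfl, hvu, hwu⟩ := exists_add_of_not_isCircuitVector hu hu0 hc
    exact Submodule.add_mem _ (ih _ (h ▸ ncard_lt_ncard hvu) hv rfl)
      (ih _ (h ▸ ncard_lt_ncard hwu) hw rfl)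

theorem indicator_mem_of_isCircuitVector [Finite X] {Z : Set X}
    (hN : ∀ c, IsCircuitVector N c → support c ⊆ Z ∨ support c ⊆ Zᶜ) {u : X → ℝ}
    (hu : u ∈ N) : Z.indicator u ∈ N := by
  refine Submodule.span_induction (p := fun v _ => Z.indicator v ∈ N) ?_ ?_ ?_ ?_
    (mem_span_isCircuitVector hu)
  · intro c hc
    rcases hN c hc with hZ | hZ
    · rw [indicator_eq_self.2 hZ]; exact hc.1
    · rw [indicator_eq_zero'.2 (subset_compl_iff_disjoint_right.1 hZ)]; exact N.zero_mem
  · simp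
  · intro v w _ _ hv hw; simpa [indicator_add'] using N.add_mem hv hw
  · intro a v _ hv; exact indicator_const_smul Z a v ▸ N.smul_mem a hv

end Circuits

section Splitting

variable {X : Type*} {T : Submodule ℝ (X → ℝ)} {Z : Set X}

lemma piecewise_mem (hZ : ∀ t ∈ T, Z.indicator t ∈ T) {s t : X → ℝ} (hs : s ∈ T)
    (ht : t ∈ T) : Z.piecewise s t ∈ T := by
  rw [← indicator_add_compl_eq_piecewise, indicator_compl]
  exact T.add_mem (hZ s hs) (T.sub_mem ht (hZ t ht))

variable [Fintype X]

lemma dotProduct_indicator_comm (Z : Set X) (u v : X → ℝ) :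
    u ⬝ᵥ Z.indicator v = Z.indicator u ⬝ᵥ v :=
  Finset.sum_congr rfl fun x _ => by by_cases hx : x ∈ Z <;> simp [hx]

lemma nondegenerate_dotProductBilin :
    (dotProductBilin ℝ ℝ : LinearMap.BilinForm ℝ (X → ℝ)).Nondegenerate :=
  ⟨fun u hu => dotProduct_self_eq_zero.1 (hu u), fun u hu => dotProduct_self_eq_zero.1 (hu u)⟩

lemma isRefl_dotProductBilin : (dotProductBilin ℝ ℝ : LinearMap.BilinForm ℝ (X → ℝ)).IsRefl :=
  fun u v h => by simpa [dotProduct_comm] using h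

lemma coe_orthogonal_dotProductBilin (T : Submodule ℝ (X → ℝ)) :
    (LinearMap.BilinForm.orthogonal (dotProductBilin ℝ ℝ) T : Set (X → ℝ)) = orthSpace T := by
  ext u
  simp [orthSpace, dotProduct, mul_comm]

theorem indicator_mem_of_isCircuitVector_orthSpace
    (hZ : ∀ c, IsCircuitVector (orthSpace T) c → support c ⊆ Z ∨ support c ⊆ Zᶜ)
    {t : X → ℝ} (ht : t ∈ T) : Z.indicator t ∈ T := by
  -- restriction to `Z` is self-adjoint, so preserving `N` it preserves `T = Nᗮ`
  set B : LinearMap.BilinForm ℝ (X → ℝ) := dotProductBilin ℝ ℝ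
  rw [← coe_orthogonal_dotProductBilin] at hZ
  rw [← B.orthogonal_orthogonal nondegenerate_dotProductBilin isRefl_dotProductBilin T] at ht ⊢
  intro v hv
  have hortho := ht _ (indicator_mem_of_isCircuitVector hZ hv)
  simp only [B, dotProductBilin_apply_apply] at hortho ⊢
  rwa [dotProduct_indicator_comm]

end Splitting

noncomputable section ExpFam

variable {X : Type*}

lemma continuous_indicator_fun (Z : Set X) : Continuous (Z.indicator : (X → ℝ) → X → ℝ) :=
  continuous_pi fun x => by
    by_cases hx : x ∈ Z
    · simpa [hx] using continuous_apply x
    · simpa [hx] using continuous_const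

variable [Fintype X] {ν : X → ℝ} {T : Submodule ℝ (X → ℝ)} {Z : Set X}

/-- The conditional distribution `Q(·|Z)`; it is `0` when `Q` has no mass on `Z`. -/
def condOn (Z : Set X) (Q : X → ℝ) : X → ℝ := (∑ x, Z.indicator Q x)⁻¹ • Z.indicator Q

lemma support_condOn_subset (Z : Set X) (Q : X → ℝ) : support (condOn Z Q) ⊆ Z :=
  (support_const_smul_subset _ _).trans support_indicator_subset

lemma sum_condOn {Q : X → ℝ} (hQ : ∑ x, Z.indicator Q x ≠ 0) : ∑ x, condOn Z Q x = 1 := by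
  simp only [condOn, Pi.smul_apply, smul_eq_mul, ← Finset.mul_sum, inv_mul_cancel₀ hQ]

lemma smul_condOn {Q : X → ℝ} (hQ : ∑ x, Z.indicator Q x ≠ 0) :
    (∑ x, Z.indicator Q x) • condOn Z Q = Z.indicator Q := by
  rw [condOn, smul_smul, mul_inv_cancel₀ hQ, one_smul]

lemma condOn_eq_self {P : X → ℝ} (hP : support P ⊆ Z) (h1 : ∑ x, P x = 1) :
    condOn Z P = P := by
  rw [condOn, indicator_eq_self.2 hP, h1, inv_one, one_smul]

lemma continuousAt_condOn {Q : X → ℝ} (hQ : ∑ x, Z.indicator Q x ≠ 0) :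
    ContinuousAt (condOn Z) Q := by
  have hmass : Continuous fun Q : X → ℝ => ∑ x, Z.indicator Q x :=
    continuous_finsetSum _ fun x _ => (continuous_apply x).comp (continuous_indicator_fun Z)
  exact (hmass.continuousAt.inv₀ hQ).smul (continuous_indicator_fun Z).continuousAt

lemma closure_expFam_subset : closure (expFam ν T) ⊆ {P | IsProb P} := by
  refine closure_minimal (fun P hP => ⟨fun x => (hP.1 x).le, hP.2.1⟩) ?_
  simp only [IsProb, ofPred_and, ofPred_forall]
  exact (isClosed_iInter fun x => isClosed_le continuous_const (continuous_apply x)).inter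
    (isClosed_eq (continuous_finsetSum _ fun x _ => continuous_apply x) continuous_const)

lemma inv_sum_smul_mem_expFam [Nonempty X] (hν : ∀ x, 0 < ν x) (h1 : (fun _ => (1 : ℝ)) ∈ T) :
    (∑ x, ν x)⁻¹ • ν ∈ expFam ν T := by
  have hS : 0 < ∑ x, ν x := Finset.sum_pos (fun x _ => hν x) Finset.univ_nonempty
  refine ⟨fun x => mul_pos (inv_pos.2 hS) (hν x), ?_, ?_⟩
  · simp [← Finset.mul_sum, hS.ne']
  · convert T.smul_mem (Real.log (∑ x, ν x)⁻¹) h1 using 1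
    ext x
    simp [mul_div_assoc, div_self (hν x).ne']

lemma sum_indicator_pos {Q : X → ℝ} (hZ : Z.Nonempty) (hQ : ∀ x, 0 < Q x) :
    0 < ∑ x, Z.indicator Q x := by
  obtain ⟨z, hz⟩ := hZ
  exact Finset.sum_pos' (fun x _ => indicator_nonneg (fun x _ => (hQ x).le) x)
    ⟨z, Finset.mem_univ z, by simpa [hz] using hQ z⟩

lemma mix_condOn_mem_expFam (hν : ∀ x, 0 < ν x) (h1 : (fun _ => (1 : ℝ)) ∈ T)
    (hZ : ∀ t ∈ T, Z.indicator t ∈ T) (hZne : Z.Nonempty) (hZc : Zᶜ.Nonempty) {μ : ℝ}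
    (hμ : μ ∈ Ioo 0 1) {Q R : X → ℝ} (hQ : Q ∈ expFam ν T) (hR : R ∈ expFam ν T) :
    μ • condOn Z Q + (1 - μ) • condOn Zᶜ R ∈ expFam ν T := by
  obtain ⟨hQpos, -, hQlog⟩ := hQ
  obtain ⟨hRpos, -, hRlog⟩ := hR
  have hmQ := sum_indicator_pos hZne hQpos
  have hmR := sum_indicator_pos hZc hRpos
  set a := μ * (∑ x, Z.indicator Q x)⁻¹
  set b := (1 - μ) * (∑ x, Zᶜ.indicator R x)⁻¹
  have ha : 0 < a := mul_pos hμ.1 (inv_pos.2 hmQ)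
  have hb : 0 < b := mul_pos (sub_pos.2 hμ.2) (inv_pos.2 hmR)
  have hM : μ • condOn Z Q + (1 - μ) • condOn Zᶜ R = Z.piecewise (a • Q) (b • R) := by
    ext x
    by_cases hx : x ∈ Z <;> simp [condOn, hx, a, b, mul_assoc]
  refine ⟨?_, ?_, ?_⟩
  · intro x
    rw [hM]
    by_cases hx : x ∈ Z
    · simpa [hx] using mul_pos ha (hQpos x)
    · simpa [hx] using mul_pos hb (hRpos x)
  · simp [Finset.sum_add_distrib, ← Finset.mul_sum, sum_condOn hmQ.ne', sum_condOn hmR.ne']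
  · rw [hM]
    convert piecewise_mem hZ (T.add_mem (T.smul_mem (Real.log a) h1) hQlog)
      (T.add_mem (T.smul_mem (Real.log b) h1) hRlog) using 1
    ext x
    by_cases hx : x ∈ Z
    · simp [hx, mul_div_assoc, Real.log_mul ha.ne' (div_pos (hQpos x) (hν x)).ne']
    · simp [hx, mul_div_assoc, Real.log_mul hb.ne' (div_pos (hRpos x) (hν x)).ne']

lemma mix_condOn_mem_closure (hν : ∀ x, 0 < ν x) (h1 : (fun _ => (1 : ℝ)) ∈ T)
    (hZ : ∀ t ∈ T, Z.indicator t ∈ T) (hZne : Z.Nonempty) (hZc : Zᶜ.Nonempty) {μ : ℝ}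
    (hμ : μ ∈ Icc 0 1) {Q R : X → ℝ} (hQ : Q ∈ closure (expFam ν T))
    (hR : R ∈ closure (expFam ν T)) (hQZ : ∑ x, Z.indicator Q x ≠ 0)
    (hRZ : ∑ x, Zᶜ.indicator R x ≠ 0) :
    μ • condOn Z Q + (1 - μ) • condOn Zᶜ R ∈ closure (expFam ν T) := by
  have hcont : ContinuousAt
      (fun p : ℝ × (X → ℝ) × (X → ℝ) => p.1 • condOn Z p.2.1 + (1 - p.1) • condOn Zᶜ p.2.2)
      (μ, Q, R) := by
    have hQ' : ContinuousAt (fun p : ℝ × (X → ℝ) × (X → ℝ) => condOn Z p.2.1) (μ, Q, R) :=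
      (continuousAt_condOn hQZ).comp' continuousAt_snd.fst
    have hR' : ContinuousAt (fun p : ℝ × (X → ℝ) × (X → ℝ) => condOn Zᶜ p.2.2) (μ, Q, R) :=
      (continuousAt_condOn hRZ).comp' continuousAt_snd.snd
    fun_prop
  have hmem : (μ, Q, R) ∈ closure (Ioo 0 1 ×ˢ expFam ν T ×ˢ expFam ν T) := by
    rw [closure_prod_eq, closure_prod_eq, closure_Ioo zero_ne_one]
    exact ⟨hμ, hQ, hR⟩
  have himage := mem_closure_image hcont hmem
  refine closure_mono ?_ himage
  rintro _ ⟨⟨μ', Q', R'⟩, ⟨hμ', hQ', hR'⟩, rfl⟩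
  exact mix_condOn_mem_expFam hν h1 hZ hZne hZc hμ' hQ' hR'

lemma exists_mem_closure_smul_eq_indicator (hν : ∀ x, 0 < ν x) (h1 : (fun _ => (1 : ℝ)) ∈ T)
    (hZ : ∀ t ∈ T, Z.indicator t ∈ T) (hZne : Z.Nonempty) (hZc : Zᶜ.Nonempty) {P : X → ℝ}
    (hP : P ∈ closure (expFam ν T)) :
    ∃ P₁ ∈ closure (expFam ν T), support P₁ ⊆ Z ∧ (∑ x, Z.indicator P x) • P₁ = Z.indicator P := by
  have : Nonempty X := ⟨hZne.some⟩
  have hQ₀ := inv_sum_smul_mem_expFam hν h1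
  have hcond : ∀ Q ∈ closure (expFam ν T), ∑ x, Z.indicator Q x ≠ 0 →
      condOn Z Q ∈ closure (expFam ν T) := fun Q hQ hQZ => by
    simpa using mix_condOn_mem_closure hν h1 hZ hZne hZc ⟨zero_le_one, le_rfl⟩ hQ
      (subset_closure hQ₀) hQZ (sum_indicator_pos hZc hQ₀.1).ne'
  by_cases hPZ : ∑ x, Z.indicator P x = 0
  · refine ⟨_, hcond _ (subset_closure hQ₀) (sum_indicator_pos hZne hQ₀.1).ne',
      support_condOn_subset _ _, ?_⟩
    have hPnn : ∀ x, 0 ≤ Z.indicator P x :=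
      indicator_nonneg fun x _ => (closure_expFam_subset hP).1 x
    rw [hPZ, zero_smul]
    funext x
    exact ((Finset.sum_eq_zero_iff_of_nonneg fun x _ => hPnn x).1 hPZ x (Finset.mem_univ x)).symm
  · exact ⟨condOn Z P, hcond P hP hPZ, support_condOn_subset _ _, smul_condOn hPZ⟩

end ExpFam

theorem stmt1_general (X : Type*) [Fintype X]
    (ν : X → ℝ) (hν : ∀ x, 0 < ν x)
    (T : Submodule ℝ (X → ℝ)) (h1 : (fun _ => (1 : ℝ)) ∈ T)
    (Y : Set X) (hY1 : Y.Nonempty) (hY2 : Y ≠ Set.univ)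
    (hcirc : ∀ c : X → ℝ, IsCircuitVector (orthSpace T) c →
      Function.support c ⊆ Y ∨ Function.support c ⊆ Yᶜ) :
    closure (expFam ν T) =
      {P : X → ℝ | ∃ lam : ℝ, lam ∈ Set.Icc (0 : ℝ) 1 ∧ ∃ P₁ P₂ : X → ℝ,
        P₁ ∈ closure (expFam ν T) ∧ Function.support P₁ ⊆ Y ∧
        P₂ ∈ closure (expFam ν T) ∧ Function.support P₂ ⊆ Yᶜ ∧
        P = lam • P₁ + (1 - lam) • P₂} := by
  have hY : ∀ t ∈ T, Y.indicator t ∈ T := fun t ht =>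
    indicator_mem_of_isCircuitVector_orthSpace hcirc ht
  have hYc : ∀ t ∈ T, Yᶜ.indicator t ∈ T := fun t ht =>
    indicator_compl Y t ▸ T.sub_mem ht (hY t ht)
  have hYc_ne : Yᶜ.Nonempty := nonempty_compl.2 hY2
  ext P
  constructor
  · intro hP
    obtain ⟨hPnn, hPsum⟩ := closure_expFam_subset hP
    obtain ⟨P₁, h₁, hs₁, he₁⟩ := exists_mem_closure_smul_eq_indicator hν h1 hY hY1 hYc_ne hP
    obtain ⟨P₂, h₂, hs₂, he₂⟩ := exists_mem_closure_smul_eq_indicator hν h1 hYc hYc_ne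
      (by rwa [compl_compl]) hP
    have hmass : ∑ x, Yᶜ.indicator P x = 1 - ∑ x, Y.indicator P x := by
      simp only [indicator_compl, Pi.sub_apply, Finset.sum_sub_distrib, hPsum]
    have hnn : ∀ Z : Set X, 0 ≤ ∑ x, Z.indicator P x := fun Z =>
      Finset.sum_nonneg fun x _ => indicator_nonneg (fun x _ => hPnn x) x
    refine ⟨∑ x, Y.indicator P x, ⟨hnn Y, by linarith [hnn Yᶜ]⟩, P₁, P₂, h₁, hs₁, h₂, hs₂, ?_⟩
    rw [← hmass, he₁, he₂, indicator_self_add_compl]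
  · rintro ⟨lam, hlam, P₁, P₂, h₁, hs₁, h₂, hs₂, rfl⟩
    have hP₁ := (closure_expFam_subset h₁).2
    have hP₂ := (closure_expFam_subset h₂).2
    rw [← condOn_eq_self hs₁ hP₁, ← condOn_eq_self hs₂ hP₂]
    refine mix_condOn_mem_closure hν h1 hY hY1 hYc_ne hlam h₁ h₂ ?_ ?_
    · rw [indicator_eq_self.2 hs₁, hP₁]; exact one_ne_zero
    · rw [indicator_eq_self.2 hs₂, hP₂]; exact one_ne_zero

/-- if every circuit vector of the normal space has support inside `Y` or
inside `X∖Y`, then the closure of the exponential family is the corresponding mixture. -/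
theorem stmt1 (X : Type*) [Fintype X] [Nonempty X]
    (ν : X → ℝ) (hν : ∀ x, 0 < ν x)
    (T : Submodule ℝ (X → ℝ)) (h1 : (fun _ => (1 : ℝ)) ∈ T)
    (Y : Set X) (hY1 : Y.Nonempty) (hY2 : Y ≠ Set.univ)
    (hcirc : ∀ c : X → ℝ, IsCircuitVector (orthSpace T) c →
      Function.support c ⊆ Y ∨ Function.support c ⊆ Yᶜ) :
    closure (expFam ν T) =
      {P : X → ℝ | ∃ lam : ℝ, lam ∈ Set.Icc (0 : ℝ) 1 ∧ ∃ P₁ P₂ : X → ℝ,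
        P₁ ∈ closure (expFam ν T) ∧ Function.support P₁ ⊆ Y ∧
        P₂ ∈ closure (expFam ν T) ∧ Function.support P₂ ⊆ Yᶜ ∧
        P = lam • P₁ + (1 - lam) • P₂} :=
  stmt1_general X ν hν T h1 Y hY1 hY2 hcirc
end

section
/- Let E be an exponential family on a finite set X. If the topological closure of E (in ℝ^X) does not equal the set of all probability distributions on X, then sup_P inf_{Q∈E} D(P‖Q) ≥ log 2, where the supremum is over all probability distributions P on X. -/
open scoped BigOperators Classical

/-!
If `closure E` is not the whole simplex, then `T ≠ ℝ^X`, so some `u ≠ 0` is orthogonal to `T`;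
as `T` contains the constants, `∑ u = 0`, and rescaling `u = p - q` splits it into two
probability distributions with disjoint supports. For `Q ∈ E` the function `log Q` lies in
`T + log ν`, hence `∑ u log Q` does not depend on `Q`, and neither does `D(p‖Q) - D(q‖Q)`.
On the other hand, writing `M = (p + q)/2`, disjointness gives
`D(p‖Q) + D(q‖Q) = 2 D(M‖Q) + 2 log 2 ≥ 2 log 2`. So whichever of `p`, `q` has the larger
divergence (the same one for every `Q`) is at divergence at least `log 2` from all of `E`.
-/

open Real Finset InformationTheory

lemma sub_le_mul_log_div {a b : ℝ} (ha : 0 ≤ a) (hb : 0 < b) : a - b ≤ a * log (a / b) := by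
  have h : b * klFun (a / b) = a * log (a / b) + b - a := by
    rw [klFun_apply]
    field_simp
  linarith [mul_nonneg hb.le (klFun_nonneg (div_nonneg ha hb.le))]

lemma mul_log_div_eq_two_mul_half {r b : ℝ} (hr : 0 ≤ r) (hb : b ≠ 0) :
    r * log (r / b) = 2 * (r / 2 * log (r / 2 / b)) + r * log 2 := by
  rcases hr.eq_or_lt with rfl | hr
  · simp
  · rw [div_right_comm, log_div (div_ne_zero hr.ne' hb) two_ne_zero]
    ring

lemma forall_le_or_forall_le_of_sub_eq {ι : Type*} {s : Set ι} {f g : ι → ℝ} {c K : ℝ}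
    (hsum : ∀ i ∈ s, 2 * c ≤ f i + g i) (hdiff : ∀ i ∈ s, f i - g i = K) :
    (∀ i ∈ s, c ≤ f i) ∨ ∀ i ∈ s, c ≤ g i := by
  rcases le_total 0 K with hK | hK
  · exact .inl fun i hi => by linarith [hsum i hi, hdiff i hi]
  · exact .inr fun i hi => by linarith [hsum i hi, hdiff i hi]

section

variable {X : Type*} [Fintype X]

/-- `D(p‖q)` as a real number; junk unless `q` is strictly positive. -/
noncomputable def klReal (p q : X → ℝ) : ℝ := ∑ x, p x * log (p x / q x)

lemma KL_of_pos {P Q : X → ℝ} (hQ : ∀ x, 0 < Q x) : KL P Q = klReal P Q := by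
  rw [KL, if_pos fun x hx => absurd hx (hQ x).ne']
  rfl

lemma sum_sub_sum_le_klReal {p q : X → ℝ} (hp : ∀ x, 0 ≤ p x) (hq : ∀ x, 0 < q x) :
    ∑ x, p x - ∑ x, q x ≤ klReal p q := by
  rw [← sum_sub_distrib]
  exact sum_le_sum fun x _ => sub_le_mul_log_div (hp x) (hq x)

lemma klReal_eq_sub {p q : X → ℝ} (hq : ∀ x, q x ≠ 0) :
    klReal p q = ∑ x, p x * log (p x) - ∑ x, p x * log (q x) := by
  rw [klReal, ← sum_sub_distrib]
  refine sum_congr rfl fun x _ => ?_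
  rcases eq_or_ne (p x) 0 with hpx | hpx
  · simp [hpx]
  · rw [log_div hpx (hq x), mul_sub]

lemma two_mul_log_two_le_klReal_add {p q Q : X → ℝ} (hp : IsProb p) (hq : IsProb q)
    (hpq : ∀ x, p x = 0 ∨ q x = 0) (hQ : ∀ x, 0 < Q x) (hQ1 : ∑ x, Q x ≤ 1) :
    2 * log 2 ≤ klReal p Q + klReal q Q := by
  set M : X → ℝ := fun x => (p x + q x) / 2
  have hM : ∑ x, M x = 1 := by
    simp only [M, ← sum_div, sum_add_distrib, hp.2, hq.2]
    norm_num
  have hMQ : 0 ≤ klReal M Q := by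
    linarith [sum_sub_sum_le_klReal (fun x => div_nonneg (add_nonneg (hp.1 x) (hq.1 x))
      zero_le_two) hQ]
  have hterm : ∀ x, p x * log (p x / Q x) + q x * log (q x / Q x)
      = 2 * (M x * log (M x / Q x)) + (p x + q x) * log 2 := by
    intro x
    rw [← mul_log_div_eq_two_mul_half (add_nonneg (hp.1 x) (hq.1 x)) (hQ x).ne']
    rcases hpq x with h | h <;> simp [h]
  calc 2 * log 2 ≤ 2 * klReal M Q + (∑ x, p x + ∑ x, q x) * log 2 := by
        rw [hp.2, hq.2]
        linarith
    _ = klReal p Q + klReal q Q := by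
        simp only [klReal, ← sum_add_distrib, hterm, mul_sum, sum_mul]

lemma exists_isProb_sub_isProb_eq_smul {u : X → ℝ} (hu : u ≠ 0) (hsum : ∑ x, u x = 0) :
    ∃ p q : X → ℝ, IsProb p ∧ IsProb q ∧ (∀ x, p x = 0 ∨ q x = 0) ∧ ∃ c : ℝ, p - q = c • u := by
  set s := ∑ x, (u x)⁺
  have hneg : ∑ x, (u x)⁻ = s := by
    have h := congrArg (fun v : X → ℝ => ∑ x, v x) (posPart_sub_negPart u)
    simp only [Pi.sub_apply, Pi.posPart_apply, Pi.negPart_apply, sum_sub_distrib, hsum] at h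
    linarith
  have hs : 0 < s := by
    refine (sum_nonneg fun x _ => posPart_nonneg (u x)).lt_of_ne fun hs => hu ?_
    have hpos := (sum_eq_zero_iff_of_nonneg fun x _ => posPart_nonneg (u x)).mp hs.symm
    have hneg := (sum_eq_zero_iff_of_nonneg fun x _ => negPart_nonneg (u x)).mp
      (hneg.trans hs.symm)
    ext x
    rw [← posPart_sub_negPart u]
    simp [hpos x (mem_univ x), hneg x (mem_univ x)]
  refine ⟨s⁻¹ • u⁺, s⁻¹ • u⁻, ⟨fun x => ?_, ?_⟩, ⟨fun x => ?_, ?_⟩, fun x => ?_, s⁻¹, ?_⟩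
  · exact mul_nonneg (inv_nonneg.mpr hs.le) (posPart_nonneg (u x))
  · simp only [Pi.smul_apply, Pi.posPart_apply, smul_eq_mul, ← mul_sum]
    exact inv_mul_cancel₀ hs.ne'
  · exact mul_nonneg (inv_nonneg.mpr hs.le) (negPart_nonneg (u x))
  · simp only [Pi.smul_apply, Pi.negPart_apply, smul_eq_mul, ← mul_sum, hneg]
    exact inv_mul_cancel₀ hs.ne'
  · rcases le_total (u x) 0 with h | h
    · simp [posPart_eq_zero.mpr h]
    · simp [negPart_eq_zero.mpr h]
  · rw [← smul_sub, posPart_sub_negPart]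

lemma smul_mem_orthSpace {T : Submodule ℝ (X → ℝ)} {u : X → ℝ} (c : ℝ) (hu : u ∈ orthSpace T) :
    c • u ∈ orthSpace T := fun t ht => by
  simp only [Pi.smul_apply, smul_eq_mul, mul_assoc, ← mul_sum, hu t ht, mul_zero]

lemma sum_eq_zero_of_mem_orthSpace {T : Submodule ℝ (X → ℝ)} (h1 : (fun _ => (1 : ℝ)) ∈ T)
    {u : X → ℝ} (hu : u ∈ orthSpace T) : ∑ x, u x = 0 := by
  simpa using hu _ h1

lemma exists_mem_orthSpace_ne_zero {T : Submodule ℝ (X → ℝ)} (hT : T ≠ ⊤) :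
    ∃ u ∈ orthSpace T, u ≠ 0 := by
  obtain ⟨f, hf0, hfT⟩ := Submodule.exists_dual_map_eq_bot_of_lt_top hT.lt_top inferInstance
  have hf : ∀ t, f t = ∑ x, f (fun j => if x = j then 1 else 0) * t x := fun t => by
    simp only [f.pi_apply_eq_sum_univ t, smul_eq_mul, mul_comm]
  refine ⟨fun x => f (fun j => if x = j then 1 else 0), fun t ht => ?_, fun hu => hf0 ?_⟩
  · rw [← hf, ← LinearMap.mem_ker]
    exact LinearMap.le_ker_iff_map.mpr hfT ht
  · refine LinearMap.ext fun t => ?_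
    simp [hf t, congrFun hu]

lemma sum_mul_log_eq_of_mem_expFam {ν : X → ℝ} (hν : ∀ x, ν x ≠ 0) {T : Submodule ℝ (X → ℝ)}
    {Q u : X → ℝ} (hQ : Q ∈ expFam ν T) (hu : u ∈ orthSpace T) :
    ∑ x, u x * log (Q x) = ∑ x, u x * log (ν x) := by
  have h := hu _ hQ.2.2
  simp only [fun x => log_div (hQ.1 x).ne' (hν x), mul_sub, sum_sub_distrib] at h
  linarith

lemma klReal_sub_klReal_of_mem_expFam {ν : X → ℝ} (hν : ∀ x, ν x ≠ 0)
    {T : Submodule ℝ (X → ℝ)} {p q Q : X → ℝ} (hpq : p - q ∈ orthSpace T)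
    (hQ : Q ∈ expFam ν T) :
    klReal p Q - klReal q Q = ∑ x, p x * log (p x) - ∑ x, q x * log (q x)
      - ∑ x, (p - q) x * log (ν x) := by
  have hQ0 : ∀ x, Q x ≠ 0 := fun x => (hQ.1 x).ne'
  rw [klReal_eq_sub hQ0, klReal_eq_sub hQ0, ← sum_mul_log_eq_of_mem_expFam hν hQ hpq]
  simp only [Pi.sub_apply, sub_mul, sum_sub_distrib]
  ring

lemma isClosed_setOf_isProb : IsClosed {P : X → ℝ | IsProb P} := by
  simp only [IsProb, Set.ofPred_and, Set.ofPred_forall]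
  exact (isClosed_iInter fun x => isClosed_le continuous_const (continuous_apply x)).inter
    (isClosed_eq (continuous_finsetSum _ fun x _ => continuous_apply x) continuous_const)

lemma setOf_isProb_subset_closure_pos :
    {P : X → ℝ | IsProb P} ⊆ closure {P | (∀ x, 0 < P x) ∧ ∑ x, P x = 1} := by
  intro P hP
  have hX : 0 < (Fintype.card X : ℝ) := by
    have : Nonempty X := by
      by_contra h
      simpa [not_nonempty_iff.mp h] using hP.2
    exact_mod_cast Fintype.card_pos
  refine closure_mono ?_ (segment_subset_closure_openSegment (left_mem_segment ℝ P
    fun _ => (Fintype.card X : ℝ)⁻¹))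
  rintro _ ⟨a, b, ha, hb, hab, rfl⟩
  refine ⟨fun x => ?_, ?_⟩
  · have := hP.1 x
    simp only [Pi.add_apply, Pi.smul_apply, smul_eq_mul]
    positivity
  · simp [sum_add_distrib, ← mul_sum, hP.2, mul_left_comm _ b, hX.ne', hab]

lemma closure_expFam_top (ν : X → ℝ) : closure (expFam ν ⊤) = {P | IsProb P} := by
  refine (closure_minimal ?_ isClosed_setOf_isProb).antisymm
    (setOf_isProb_subset_closure_pos.trans (closure_mono ?_))
  · exact fun P hP => ⟨fun x => (hP.1 x).le, hP.2.1⟩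
  · exact fun P hP => ⟨hP.1, hP.2, Submodule.mem_top⟩

lemma le_maxDiv_of_isProb {E : Set (X → ℝ)} {P : X → ℝ} {c : EReal} (hP : IsProb P)
    (hc : ∀ Q ∈ E, c ≤ KL P Q) : c ≤ maxDiv E :=
  le_iSup₂_of_le (f := fun P (_ : P ∈ {P : X → ℝ | IsProb P}) => ⨅ Q ∈ E, KL P Q) P hP
    (le_iInf₂ hc)

end

theorem stmt2_general (X : Type*) [Fintype X]
    (ν : X → ℝ) (hν : ∀ x, 0 < ν x)
    (T : Submodule ℝ (X → ℝ)) (h1 : (fun _ => (1 : ℝ)) ∈ T)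
    (hne : closure (expFam ν T) ≠ {P : X → ℝ | IsProb P}) :
    ((Real.log 2 : ℝ) : EReal) ≤ maxDiv (expFam ν T) := by
  have hT : T ≠ ⊤ := by
    rintro rfl
    exact hne (closure_expFam_top ν)
  obtain ⟨u, hu, hu0⟩ := exists_mem_orthSpace_ne_zero hT
  obtain ⟨p, q, hp, hq, hpq, c, hc⟩ :=
    exists_isProb_sub_isProb_eq_smul hu0 (sum_eq_zero_of_mem_orthSpace h1 hu)
  have hpqT : p - q ∈ orthSpace T := hc ▸ smul_mem_orthSpace c hu
  obtain ⟨P, hP, hPE⟩ : ∃ P, IsProb P ∧ ∀ Q ∈ expFam ν T, log 2 ≤ klReal P Q := by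
    refine (forall_le_or_forall_le_of_sub_eq
      (fun Q hQ => two_mul_log_two_le_klReal_add hp hq hpq hQ.1 hQ.2.1.le)
      (fun Q hQ => klReal_sub_klReal_of_mem_expFam (fun x => (hν x).ne') hpqT hQ)).elim
      (fun h => ⟨p, hp, h⟩) (fun h => ⟨q, hq, h⟩)
  refine le_maxDiv_of_isProb hP fun Q hQ => ?_
  rw [KL_of_pos hQ.1]
  exact_mod_cast hPE Q hQ

/-- if the closure of an exponential family is not the whole probability
simplex, then `sup_P inf_{Q ∈ E} D(P‖Q) ≥ log 2`. -/
theorem stmt2 (X : Type*) [Fintype X] [Nonempty X]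
    (ν : X → ℝ) (hν : ∀ x, 0 < ν x)
    (T : Submodule ℝ (X → ℝ)) (h1 : (fun _ => (1 : ℝ)) ∈ T)
    (hne : closure (expFam ν T) ≠ {P : X → ℝ | IsProb P}) :
    ((Real.log 2 : ℝ) : EReal) ≤ maxDiv (expFam ν T) :=
  stmt2_general X ν hν T h1 hne
end

section
/- Let X' be a partition of a finite set X with closed partition model M, and let P be a probability distribution on X. Define Q* by Q*(x) = P(X^x)/|X^x| for all x ∈ X, where P(X^x) = ∑_{y∈X^x} P(y). Then Q* ∈ M, D(P‖Q*) ≤ D(P‖Q) for every Q ∈ M, and D(P‖Q*) = ∑_{x∈X, P(x)>0} P(x)·log( P(x)·|X^x| / P(X^x) ). -/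
/-!
Write `Q*` for the block average of `P`. For `Q` in the model, `log (Q*/Q)` is constant on the
blocks, and integrating a block-constant function against `P` or against its block average gives
the same result. Hence `D(P‖Q) = D(P‖Q*) + D(Q*‖Q)`, and Gibbs' inequality `D(Q*‖Q) ≥ 0` shows
that `Q*` minimises the divergence.
-/

open scoped BigOperators Classical

open Finset Real

theorem setOf_rel_eq_of_rel {X : Type*} {r : X → X → Prop} (hr : Equivalence r) {x y : X}
    (h : r x y) : {z | r x z} = {z | r y z} :=
  Set.ext fun _ => ⟨hr.trans (hr.symm h), hr.trans h⟩

section BlockAverage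

variable {X : Type*} [Fintype X] {r : X → X → Prop}

noncomputable def blockAverage (r : X → X → Prop) (f : X → ℝ) (x : X) : ℝ :=
  (∑ y ∈ {y | r x y}.toFinset, f y) / ({y | r x y}.ncard : ℝ)

theorem ncard_setOf_rel_pos (hr : Equivalence r) (x : X) :
    (0 : ℝ) < ({y | r x y}.ncard : ℝ) := by
  exact_mod_cast (Set.ncard_pos (Set.toFinite _)).mpr ⟨x, hr.refl x⟩

theorem blockAverage_eq_of_rel (hr : Equivalence r) (f : X → ℝ) {x y : X} (h : r x y) :
    blockAverage r f x = blockAverage r f y := by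
  simp only [blockAverage, setOf_rel_eq_of_rel hr h]

theorem sum_blockAverage (hr : Equivalence r) (f : X → ℝ) :
    ∑ x, blockAverage r f x = ∑ x, f x := by
  calc ∑ x, blockAverage r f x
      = ∑ x, ∑ y ∈ {y | r x y}.toFinset, f y / ({z | r y z}.ncard : ℝ) := by
        refine sum_congr rfl fun x _ => ?_
        rw [blockAverage, sum_div]
        refine sum_congr rfl fun y hy => ?_
        rw [setOf_rel_eq_of_rel hr (Set.mem_toFinset.mp hy)]
    _ = ∑ y, ∑ _x ∈ {x | r y x}.toFinset, f y / ({z | r y z}.ncard : ℝ) := by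
        refine sum_comm' fun x y => ?_
        simp only [mem_univ, Set.mem_toFinset, Set.mem_ofPred_eq, true_and, and_true]
        exact ⟨hr.symm, hr.symm⟩
    _ = ∑ y, f y := by
        refine sum_congr rfl fun y _ => ?_
        rw [sum_const, ← Set.ncard_eq_toFinset_card', nsmul_eq_mul,
          mul_div_cancel₀ _ (ncard_setOf_rel_pos hr y).ne']

theorem sum_blockAverage_mul (hr : Equivalence r) {g : X → ℝ} (hg : ∀ x y, r x y → g x = g y)
    (f : X → ℝ) : ∑ x, blockAverage r f x * g x = ∑ x, f x * g x := by
  rw [← sum_blockAverage hr (fun x => f x * g x)]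
  refine sum_congr rfl fun x _ => ?_
  rw [blockAverage, blockAverage, div_mul_eq_mul_div, sum_mul]
  congr 1
  exact sum_congr rfl fun y hy => by rw [hg x y (Set.mem_toFinset.mp hy)]

theorem blockAverage_eq_zero_iff (hr : Equivalence r) {f : X → ℝ} (hf : ∀ x, 0 ≤ f x)
    (x : X) : blockAverage r f x = 0 ↔ ∀ y, r x y → f y = 0 := by
  rw [blockAverage, div_eq_zero_iff, or_iff_left (ncard_setOf_rel_pos hr x).ne',
    sum_eq_zero_iff_of_nonneg fun y _ => hf y]
  simp only [Set.mem_toFinset, Set.mem_ofPred_eq]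

theorem eq_zero_of_blockAverage_eq_zero (hr : Equivalence r) {f : X → ℝ} (hf : ∀ x, 0 ≤ f x)
    {x : X} (h : blockAverage r f x = 0) : f x = 0 :=
  (blockAverage_eq_zero_iff hr hf x).mp h x (hr.refl x)

theorem blockAverage_mem_partModel (hr : Equivalence r) {P : X → ℝ} (hP : IsProb P) :
    blockAverage r P ∈ partModel r :=
  ⟨⟨fun x => div_nonneg (sum_nonneg fun y _ => hP.1 y) (ncard_setOf_rel_pos hr x).le,
      (sum_blockAverage hr P).trans hP.2⟩,
    fun _ _ => blockAverage_eq_of_rel hr P⟩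

theorem sub_le_mul_log_div_s3 {p q : ℝ} (hp : 0 ≤ p) (hq : 0 ≤ q) (hpq : q = 0 → p = 0) :
    p - q ≤ p * log (p / q) := by
  rcases hp.eq_or_lt with rfl | hp
  · simpa using hq
  have hq : 0 < q := hq.lt_of_ne fun h => hp.ne' (hpq h.symm)
  have := mul_le_mul_of_nonneg_left (one_sub_inv_le_log_of_pos (div_pos hp hq)) hp.le
  rwa [inv_div, mul_sub, mul_one, mul_div_cancel₀ _ hp.ne'] at this

theorem KL_nonneg {P Q : X → ℝ} (hP : IsProb P) (hQ : IsProb Q) : 0 ≤ KL P Q := by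
  unfold KL
  split_ifs with hsupp
  · refine EReal.coe_nonneg.mpr ?_
    calc (0 : ℝ) = ∑ x, (P x - Q x) := by rw [sum_sub_distrib, hP.2, hQ.2, sub_self]
      _ ≤ ∑ x, P x * log (P x / Q x) :=
        sum_le_sum fun x _ => sub_le_mul_log_div_s3 (hP.1 x) (hQ.1 x) (hsupp x)
  · exact le_top

theorem KL_eq_KL_blockAverage_add (hr : Equivalence r) {P Q : X → ℝ} (hP : ∀ x, 0 ≤ P x)
    (hQ : Q ∈ partModel r) : KL P Q = KL P (blockAverage r P) + KL (blockAverage r P) Q := by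
  set A := blockAverage r P
  have hA : ∀ x, A x = 0 → P x = 0 := fun x => eq_zero_of_blockAverage_eq_zero hr hP
  have hsupp : (∀ x, Q x = 0 → A x = 0) ↔ ∀ x, Q x = 0 → P x = 0 :=
    ⟨fun h x hx => hA x (h x hx), fun h x hx => (blockAverage_eq_zero_iff hr hP x).mpr
      fun y hxy => h y (hQ.2 x y hxy ▸ hx)⟩
  unfold KL
  rw [if_pos hA]
  by_cases hPQ : ∀ x, Q x = 0 → P x = 0
  · rw [if_pos hPQ, if_pos (hsupp.mpr hPQ), ← EReal.coe_add, EReal.coe_eq_coe_iff]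
    have hlog : ∀ x y, r x y → log (A x / Q x) = log (A y / Q y) := fun x y hxy => by
      rw [show A x = A y from blockAverage_eq_of_rel hr P hxy, hQ.2 x y hxy]
    have hmean : ∑ x, A x * log (A x / Q x) = ∑ x, P x * log (A x / Q x) :=
      sum_blockAverage_mul hr hlog P
    rw [hmean, ← sum_add_distrib]
    refine sum_congr rfl fun x _ => ?_
    rcases eq_or_ne (P x) 0 with h0 | h0
    · simp [h0]
    have hAx : A x ≠ 0 := mt (hA x) h0
    rw [← mul_add, ← log_mul (div_ne_zero h0 hAx) (div_ne_zero hAx (mt (hPQ x) h0)),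
      div_mul_div_cancel₀ hAx]
  · rw [if_neg hPQ, if_neg (mt hsupp.mp hPQ), EReal.coe_add_top]

theorem KL_blockAverage (hr : Equivalence r) {P : X → ℝ} (hP : ∀ x, 0 ≤ P x) :
    KL P (blockAverage r P) = ((∑ x ∈ univ.filter (fun x => 0 < P x),
        P x * log (P x * ({y | r x y}.ncard : ℝ) / (∑ y ∈ {y | r x y}.toFinset, P y)) : ℝ) :
      EReal) := by
  rw [KL, if_pos fun x => eq_zero_of_blockAverage_eq_zero hr hP, sum_filter]
  congr 1
  refine sum_congr rfl fun x _ => ?_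
  split_ifs with hpos
  · rw [blockAverage, div_div_eq_mul_div]
  · simp [le_antisymm (not_lt.mp hpos) (hP x)]

end BlockAverage

theorem stmt3_general (X : Type*) [Fintype X]
    (r : X → X → Prop) (hr : Equivalence r)
    (P : X → ℝ) (hP : IsProb P) (Qstar : X → ℝ)
    (hQstar : ∀ x, Qstar x = (∑ y ∈ {y | r x y}.toFinset, P y) / ({y | r x y}.ncard : ℝ)) :
    Qstar ∈ partModel r ∧
    (∀ Q ∈ partModel r, KL P Qstar ≤ KL P Q) ∧
    KL P Qstar = ((∑ x ∈ Finset.univ.filter (fun x => 0 < P x),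
        P x * Real.log (P x * ({y | r x y}.ncard : ℝ) / (∑ y ∈ {y | r x y}.toFinset, P y)) : ℝ) : EReal) := by
  obtain rfl : Qstar = blockAverage r P := funext hQstar
  refine ⟨blockAverage_mem_partModel hr hP, fun Q hQ => ?_, KL_blockAverage hr hP.1⟩
  rw [KL_eq_KL_blockAverage_add hr hP.1 hQ]
  exact le_add_of_nonneg_right (KL_nonneg (blockAverage_mem_partModel hr hP).1 hQ.1)

/-- the rI-projection to a partition model (partition given by the
equivalence relation `r`, block of `x` being `{y | r x y}`) averages over the blocks,
and the divergence from the model has the stated explicit form. -/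
theorem stmt3 (X : Type*) [Fintype X] [Nonempty X]
    (r : X → X → Prop) (hr : Equivalence r)
    (P : X → ℝ) (hP : IsProb P) (Qstar : X → ℝ)
    (hQstar : ∀ x, Qstar x = (∑ y ∈ {y | r x y}.toFinset, P y) / ({y | r x y}.ncard : ℝ)) :
    Qstar ∈ partModel r ∧
    (∀ Q ∈ partModel r, KL P Qstar ≤ KL P Q) ∧
    KL P Qstar = ((∑ x ∈ Finset.univ.filter (fun x => 0 < P x),
        P x * Real.log (P x * ({y | r x y}.ncard : ℝ) / (∑ y ∈ {y | r x y}.toFinset, P y)) : ℝ) : EReal) :=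
  stmt3_general X r hr P hP Qstar hQstar
end

section
/- Let X' be a partition of a finite set X of coarseness c, with closed partition model M. Then the supremum over all probability distributions P on X of inf_{Q∈M} D(P‖Q) equals log c, and this supremum is attained. -/
open scoped BigOperators Classical

/-- for a partition of coarseness `c` (partition given by the equivalence
relation `r`), the supremum over all probability distributions `P` of
`inf_{Q ∈ M} D(P‖Q)` equals `log c` and is attained. -/
theorem stmt4 (X : Type*) [Fintype X] [Nonempty X]
    (r : X → X → Prop) (hr : Equivalence r) (c : ℕ)
    (hc : IsGreatest {n : ℕ | ∃ x : X, ({y | r x y} : Set X).ncard = n} c) :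
    IsGreatest {d : EReal | ∃ P : X → ℝ, IsProb P ∧ d = ⨅ Q ∈ partModel r, KL P Q}
      ((Real.log (c : ℝ) : ℝ) : EReal) := by
  classical
  set B : X → Finset X := fun x => Finset.univ.filter fun y => r x y with hBdef
  have hmemB : ∀ x, x ∈ B x := fun x => Finset.mem_filter.2 ⟨Finset.mem_univ x, hr.refl x⟩
  have hBeq : ∀ x y, r x y → B x = B y := by
    intro x y hxy
    ext z
    simp only [hBdef, Finset.mem_filter, Finset.mem_univ, true_and]
    exact ⟨fun h => hr.trans (hr.symm hxy) h, fun h => hr.trans hxy h⟩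
  have hncard : ∀ x, ({y | r x y} : Set X).ncard = (B x).card := by
    intro x; rw [Set.ncard_eq_toFinset_card', Set.toFinset_setOf]
  have hcard_le : ∀ x, (B x).card ≤ c := fun x => hc.2 ⟨x, hncard x⟩
  obtain ⟨x₀, hx₀⟩ := hc.1
  have hcardB0 : (B x₀).card = c := by rw [← hncard x₀]; exact hx₀
  have hc1 : 1 ≤ c := by
    rw [← hcardB0]
    exact Finset.card_pos.2 ⟨x₀, hmemB x₀⟩
  have hcpos : (0:ℝ) < (c:ℝ) := by exact_mod_cast hc1
  -- the point mass at x₀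
  set δ : X → ℝ := fun x => if x = x₀ then 1 else 0 with hδdef
  have hδprob : IsProb δ := by
    constructor
    · intro x; simp only [hδdef]; split_ifs <;> norm_num
    · simp [hδdef]
  -- value of KL δ Q when Q x₀ ≠ 0
  have hKLδ : ∀ Q : X → ℝ, Q x₀ ≠ 0 → KL δ Q = ((- Real.log (Q x₀) : ℝ) : EReal) := by
    intro Q hQ
    rw [KL, if_pos]
    · congr 1
      rw [Finset.sum_eq_single x₀]
      · simp [hδdef, Real.log_div one_ne_zero hQ]
      · intro b _ hb; simp [hδdef, hb]
      · intro h; exact absurd (Finset.mem_univ x₀) h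
    · intro x hx
      by_cases h : x = x₀
      · exact absurd (h ▸ hx) hQ
      · simp [hδdef, h]
  -- lower bound for all Q in the model
  have hlb : ∀ Q ∈ partModel r, ((Real.log (c:ℝ) : ℝ) : EReal) ≤ KL δ Q := by
    intro Q hQ
    by_cases hQ0 : Q x₀ = 0
    · rw [KL, if_neg]
      · exact le_top
      · intro h
        have := h x₀ hQ0
        simp [hδdef] at this
    · rw [hKLδ Q hQ0]
      rw [EReal.coe_le_coe_iff]
      have hq_pos : 0 < Q x₀ := lt_of_le_of_ne (hQ.1.1 x₀) (Ne.symm hQ0)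
      have h1 : ∑ y ∈ B x₀, Q y = (B x₀).card * Q x₀ := by
        rw [Finset.sum_congr rfl (fun y hy => (hQ.2 x₀ y (Finset.mem_filter.1 hy).2).symm),
          Finset.sum_const, nsmul_eq_mul]
      have h2 : ∑ y ∈ B x₀, Q y ≤ ∑ y, Q y :=
        Finset.sum_le_sum_of_subset_of_nonneg (Finset.subset_univ _)
          (fun y _ _ => hQ.1.1 y)
      have h3 : (c:ℝ) * Q x₀ ≤ 1 := by
        rw [← hQ.1.2]
        calc (c:ℝ) * Q x₀ = ((B x₀).card : ℝ) * Q x₀ := by rw [hcardB0]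
          _ = ∑ y ∈ B x₀, Q y := h1.symm
          _ ≤ ∑ y, Q y := h2
      have h4 : Q x₀ ≤ 1 / (c:ℝ) := by
        rw [le_div_iff₀ hcpos]; linarith
      have h5 : Real.log (Q x₀) ≤ Real.log (1 / (c:ℝ)) :=
        Real.log_le_log hq_pos h4
      rw [one_div, Real.log_inv] at h5
      linarith
  -- the uniform distribution on the block of x₀
  set Qb : X → ℝ := fun x => if r x₀ x then 1/(c:ℝ) else 0 with hQbdef
  have hQbx₀ : Qb x₀ = 1/(c:ℝ) := by simp [hQbdef, hr.refl x₀]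
  have hQbM : Qb ∈ partModel r := by
    refine ⟨⟨fun x => ?_, ?_⟩, ?_⟩
    · simp only [hQbdef]; split_ifs <;> positivity
    · have : ∑ x, Qb x = ∑ x ∈ B x₀, (1/(c:ℝ)) := by
        rw [Finset.sum_filter]
      rw [this, Finset.sum_const, hcardB0, nsmul_eq_mul]
      field_simp
    · intro x y hxy
      simp only [hQbdef]
      have : r x₀ x ↔ r x₀ y := ⟨fun h => hr.trans h hxy, fun h => hr.trans h (hr.symm hxy)⟩
      simp [this]
  have hKLQb : KL δ Qb = ((Real.log (c:ℝ) : ℝ) : EReal) := by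
    rw [hKLδ Qb (by rw [hQbx₀]; positivity), hQbx₀, one_div, Real.log_inv, neg_neg]
  have hinfδ : ⨅ Q ∈ partModel r, KL δ Q = ((Real.log (c:ℝ) : ℝ) : EReal) := by
    refine le_antisymm ?_ (le_iInf₂ hlb)
    exact le_trans (iInf₂_le Qb hQbM) hKLQb.le
  constructor
  · exact ⟨δ, hδprob, hinfδ.symm⟩
  · rintro d ⟨P, hP, rfl⟩
    -- the I-projection of P
    set PB : X → ℝ := fun x => ∑ y ∈ B x, P y with hPBdef
    set Qs : X → ℝ := fun x => PB x / ((B x).card : ℝ) with hQsdef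
    have hPB_nonneg : ∀ x, 0 ≤ PB x := fun x => Finset.sum_nonneg fun y _ => hP.1 y
    have hPlePB : ∀ x, P x ≤ PB x := fun x =>
      Finset.single_le_sum (fun y _ => hP.1 y) (hmemB x)
    have hnpos : ∀ x, (0:ℝ) < ((B x).card : ℝ) := fun x =>
      Nat.cast_pos.2 (Finset.card_pos.2 ⟨x, hmemB x⟩)
    have hPBeq : ∀ x y, r x y → PB x = PB y := fun x y h => by
      simp only [hPBdef]; rw [hBeq x y h]
    have hQseq : ∀ x y, r x y → Qs x = Qs y := fun x y h => by
      simp only [hQsdef]; rw [hBeq x y h, hPBeq x y h]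
    -- sum of Qs is 1, by fiberwise decomposition over the quotient
    letI sd : Setoid X := ⟨r, hr⟩
    have hfilter : ∀ z : X,
        Finset.univ.filter (fun a => Quotient.mk sd a = Quotient.mk sd z) = B z := by
      intro z; ext y
      simp only [hBdef, Finset.mem_filter, Finset.mem_univ, true_and, Quotient.eq]
      exact ⟨fun h => hr.symm h, fun h => hr.symm h⟩
    have hfiber : ∀ (f : X → ℝ),
        ∑ b : Quotient sd, ∑ a ∈ Finset.univ.filter (fun a => Quotient.mk sd a = b), f a
          = ∑ a, f a :=
      fun f => Finset.sum_fiberwise_of_maps_to (fun x _ => Finset.mem_univ _) f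
    have hQs_sum : ∑ x, Qs x = 1 := by
      rw [← hfiber Qs, ← hP.2, ← hfiber P]
      refine Finset.sum_congr rfl fun b _ => ?_
      induction b using Quotient.ind with
      | _ z =>
        rw [hfilter z]
        have hcongr : ∀ y ∈ B z, Qs y = PB z / ((B z).card : ℝ) := by
          intro y hy
          have hry : r z y := (Finset.mem_filter.1 hy).2
          rw [hQseq y z (hr.symm hry)]
        rw [Finset.sum_congr rfl hcongr, Finset.sum_const, nsmul_eq_mul,
          mul_div_cancel₀ _ (hnpos z).ne']
    have hQsM : Qs ∈ partModel r :=
      ⟨⟨fun x => div_nonneg (hPB_nonneg x) (hnpos x).le, hQs_sum⟩, hQseq⟩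
    have hQs0 : ∀ x, Qs x = 0 → P x = 0 := by
      intro x h
      simp only [hQsdef] at h
      rw [div_eq_zero_iff] at h
      rcases h with h | h
      · linarith [hP.1 x, hPlePB x]
      · exact absurd h (hnpos x).ne'
    have hKLQs : KL P Qs ≤ ((Real.log (c:ℝ) : ℝ) : EReal) := by
      rw [KL, if_pos hQs0, EReal.coe_le_coe_iff]
      calc ∑ x, P x * Real.log (P x / Qs x) ≤ ∑ x, P x * Real.log (c:ℝ) := by
            refine Finset.sum_le_sum fun x _ => ?_
            rcases eq_or_lt_of_le (hP.1 x) with h0 | hpos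
            · rw [← h0]; ring_nf; exact le_refl 0
            · have hPBpos : 0 < PB x := lt_of_lt_of_le hpos (hPlePB x)
              have hQspos : 0 < Qs x := div_pos hPBpos (hnpos x)
              refine mul_le_mul_of_nonneg_left ?_ hpos.le
              refine Real.log_le_log (div_pos hpos hQspos) ?_
              have h1 : P x / Qs x ≤ ((B x).card : ℝ) := by
                rw [hQsdef, div_div_eq_mul_div, div_le_iff₀ hPBpos]
                calc P x * ((B x).card : ℝ) ≤ PB x * ((B x).card : ℝ) :=
                      mul_le_mul_of_nonneg_right (hPlePB x) (hnpos x).le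
                  _ = ((B x).card : ℝ) * PB x := by ring
              refine h1.trans ?_
              exact_mod_cast hcard_le x
        _ = Real.log (c:ℝ) := by rw [← Finset.sum_mul, hP.2, one_mul]
    exact le_trans (iInf₂_le Qs hQsM) hKLQs
end

section
/- Let X' be a partition of a finite set X of coarseness c, with closed partition model M, and let P be a probability distribution on X, writing P(B) = ∑_{y∈B} P(y) for a block B. Then inf_{Q∈M} D(P‖Q) = log c if and only if both of the following hold: (i) every block B of X' with P(B) > 0 has cardinality |B| = c; and (ii) for every block B with P(B) > 0 there is exactly one x ∈ B with P(x) > 0. -/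
open scoped BigOperators Classical

/-!
The infimum is attained at the information projection `Q* = blockAvg r P`, which spreads the
mass `P(B)` of each block uniformly over `B`: for `Q` in the model, `log t ≤ t - 1` applied to
`t = Q/Q*` gives `D(P‖Q) - D(P‖Q*) ≥ 1 - ∑ Q ≥ 0`, since `Q/Q*` is constant on blocks and
averaging over blocks preserves sums. Hence the infimum is
`∑ₓ P(x) log (P(x) |Bₓ| / P(Bₓ))`. Each ratio `P(x) |Bₓ| / P(Bₓ)` is at most `|Bₓ| ≤ c`, so the
infimum is at most `log c`, with equality iff every `x` with `P(x) > 0` lies in a block of size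
`c` carrying no other mass.
-/

section

open Finset Real

variable {X : Type*} [Fintype X] {r : X → X → Prop}

noncomputable def block (r : X → X → Prop) (x : X) : Finset X := univ.filter (r x)

noncomputable def blockAvg (r : X → X → Prop) (g : X → ℝ) (x : X) : ℝ :=
  (∑ y ∈ block r x, g y) / #(block r x)

@[simp]
theorem mem_block {x y : X} : y ∈ block r x ↔ r x y := by
  simp [block]

theorem toFinset_setOf_eq_block (x : X) : {y | r x y}.toFinset = block r x := by
  ext; simp

theorem ncard_setOf_eq_card_block (x : X) : {y | r x y}.ncard = #(block r x) := by
  rw [Set.ncard_eq_toFinset_card', toFinset_setOf_eq_block]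

theorem block_eq_of_rel (hr : Equivalence r) {x y : X} (h : r x y) : block r x = block r y := by
  ext z
  simp only [mem_block]
  exact ⟨hr.trans (hr.symm h), hr.trans h⟩

theorem card_block_pos (hr : Equivalence r) (x : X) : (0 : ℝ) < #(block r x) := by
  exact_mod_cast card_pos.2 ⟨x, mem_block.2 (hr.refl x)⟩

theorem blockAvg_eq_of_rel (hr : Equivalence r) (g : X → ℝ) {x y : X} (h : r x y) :
    blockAvg r g x = blockAvg r g y := by
  rw [blockAvg, blockAvg, block_eq_of_rel hr h]

theorem sum_blockAvg (hr : Equivalence r) (g : X → ℝ) : ∑ x, blockAvg r g x = ∑ x, g x := by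
  have hcomm : ∀ x y, x ∈ univ ∧ y ∈ block r x ↔ x ∈ block r y ∧ y ∈ univ := fun x y => by
    simpa using ⟨hr.symm, hr.symm⟩
  calc ∑ x, blockAvg r g x = ∑ x, ∑ y ∈ block r x, g y / #(block r x) := by
        simp only [blockAvg, sum_div]
    _ = ∑ y, ∑ x ∈ block r y, g y / #(block r x) := sum_comm' hcomm
    _ = ∑ y, ∑ _x ∈ block r y, g y / #(block r y) := by
        refine sum_congr rfl fun y _ => sum_congr rfl fun x hx => ?_
        rw [block_eq_of_rel hr (mem_block.1 hx)]
    _ = ∑ y, g y := by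
        refine sum_congr rfl fun y _ => ?_
        rw [sum_const, nsmul_eq_mul, mul_div_cancel₀ _ (card_block_pos hr y).ne']

theorem blockAvg_mul_of_rel_eq (g : X → ℝ) {h : X → ℝ}
    (hh : ∀ x y, r x y → h x = h y) (x : X) :
    blockAvg r (fun y => g y * h y) x = blockAvg r g x * h x := by
  have hconst : ∀ y ∈ block r x, g y * h y = g y * h x := fun y hy => by
    rw [hh x y (mem_block.1 hy)]
  rw [blockAvg, blockAvg, sum_congr rfl hconst, ← sum_mul, div_mul_eq_mul_div]

theorem blockAvg_mem_partModel (hr : Equivalence r) {P : X → ℝ} (hP : IsProb P) :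
    blockAvg r P ∈ partModel r :=
  ⟨⟨fun x => div_nonneg (sum_nonneg fun y _ => hP.1 y) (card_block_pos hr x).le,
    (sum_blockAvg hr P).trans hP.2⟩, fun _ _ => blockAvg_eq_of_rel hr P⟩

theorem le_sum_block (hr : Equivalence r) {P : X → ℝ} (hP : ∀ x, 0 ≤ P x) (x : X) :
    P x ≤ ∑ y ∈ block r x, P y :=
  single_le_sum (fun y _ => hP y) (mem_block.2 (hr.refl x))

theorem blockAvg_pos (hr : Equivalence r) {P : X → ℝ} (hP : ∀ x, 0 ≤ P x) {x : X}
    (hx : 0 < P x) : 0 < blockAvg r P x :=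
  div_pos (hx.trans_le (le_sum_block hr hP x)) (card_block_pos hr x)

theorem div_blockAvg_le_card (hr : Equivalence r) {P : X → ℝ} (hP : ∀ x, 0 ≤ P x) (x : X) :
    P x / blockAvg r P x ≤ #(block r x) := by
  rcases (hP x).eq_or_lt with hx | hx
  · rw [← hx, zero_div]
    exact (card_block_pos hr x).le
  · rw [blockAvg, div_div_eq_mul_div, div_le_iff₀ (hx.trans_le (le_sum_block hr hP x)), mul_comm]
    exact mul_le_mul_of_nonneg_left (le_sum_block hr hP x) (card_block_pos hr x).le

theorem div_blockAvg_eq_card_iff (hr : Equivalence r) {P : X → ℝ} (hP : ∀ x, 0 ≤ P x) {x : X}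
    (hx : 0 < P x) : P x / blockAvg r P x = #(block r x) ↔ P x = ∑ y ∈ block r x, P y := by
  have hsum := hx.trans_le (le_sum_block hr hP x)
  rw [blockAvg, div_div_eq_mul_div, div_eq_iff hsum.ne', mul_comm,
    mul_right_inj' (card_block_pos hr x).ne']

theorem eq_zero_of_blockAvg_eq_zero (hr : Equivalence r) {P : X → ℝ} (hP : ∀ x, 0 ≤ P x) {x : X}
    (hx : blockAvg r P x = 0) : P x = 0 := by
  by_contra hne
  exact (blockAvg_pos hr hP ((hP x).lt_of_ne' hne)).ne' hx

theorem mul_log_div_add_sub_le {p q s : ℝ} (hp : 0 < p) (hq : 0 < q) (hs : 0 < s) :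
    p * log (p / s) + (p - p * (q / s)) ≤ p * log (p / q) := by
  have hsplit : log (p / s) = log (p / q) + log (q / s) := by
    rw [← log_mul (div_pos hp hq).ne' (div_pos hq hs).ne', div_mul_div_cancel₀ hq.ne']
  have hlog := mul_le_mul_of_nonneg_left (log_le_sub_one_of_pos (div_pos hq hs)) hp.le
  rw [hsplit]
  nlinarith

theorem sum_mul_div_blockAvg_le (hr : Equivalence r) {P Q : X → ℝ} (hQ : Q ∈ partModel r) :
    ∑ x, P x * (Q x / blockAvg r P x) ≤ 1 := by
  obtain ⟨⟨hQ0, hQ1⟩, hQr⟩ := hQ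
  have hratio : ∀ x y, r x y → Q x / blockAvg r P x = Q y / blockAvg r P y := fun x y h => by
    rw [hQr x y h, blockAvg_eq_of_rel hr P h]
  calc ∑ x, P x * (Q x / blockAvg r P x)
      = ∑ x, blockAvg r P x * (Q x / blockAvg r P x) := by
        rw [← sum_blockAvg hr]
        exact sum_congr rfl fun x _ => blockAvg_mul_of_rel_eq P hratio x
    _ ≤ ∑ x, Q x := sum_le_sum fun x _ => by
        rcases eq_or_ne (blockAvg r P x) 0 with h | h
        · rw [h, zero_mul]
          exact hQ0 x
        · rw [mul_div_cancel₀ _ h]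
    _ = 1 := hQ1

theorem KL_blockAvg (hr : Equivalence r) {P : X → ℝ} (hP : IsProb P) :
    KL P (blockAvg r P) = ((∑ x, P x * log (P x / blockAvg r P x) : ℝ) : EReal) :=
  if_pos fun _ => eq_zero_of_blockAvg_eq_zero hr hP.1

theorem KL_blockAvg_le (hr : Equivalence r) {P Q : X → ℝ} (hP : IsProb P)
    (hQ : Q ∈ partModel r) : KL P (blockAvg r P) ≤ KL P Q := by
  rw [KL_blockAvg hr hP, KL]
  split_ifs with hsupp
  · rw [EReal.coe_le_coe_iff]
    have hterm : ∀ x, P x * log (P x / blockAvg r P x) + (P x - P x * (Q x / blockAvg r P x))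
        ≤ P x * log (P x / Q x) := fun x => by
      rcases (hP.1 x).eq_or_lt with hx | hx
      · simp [← hx]
      · refine mul_log_div_add_sub_le hx ((hQ.1.1 x).lt_of_ne fun h => ?_)
          (blockAvg_pos hr hP.1 hx)
        exact hx.ne' (hsupp x h.symm)
    calc ∑ x, P x * log (P x / blockAvg r P x)
        ≤ ∑ x, P x * log (P x / blockAvg r P x) + (1 - ∑ x, P x * (Q x / blockAvg r P x)) := by
          linarith [sum_mul_div_blockAvg_le hr (P := P) hQ]
      _ = ∑ x, (P x * log (P x / blockAvg r P x) + (P x - P x * (Q x / blockAvg r P x))) := by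
          rw [sum_add_distrib, sum_sub_distrib, hP.2]
      _ ≤ ∑ x, P x * log (P x / Q x) := sum_le_sum fun x _ => hterm x
  · exact le_top

theorem iInf_KL_partModel (hr : Equivalence r) {P : X → ℝ} (hP : IsProb P) :
    ⨅ Q ∈ partModel r, KL P Q = ((∑ x, P x * log (P x / blockAvg r P x) : ℝ) : EReal) := by
  rw [← KL_blockAvg hr hP]
  exact le_antisymm (iInf₂_le _ (blockAvg_mem_partModel hr hP))
    (le_iInf₂ fun Q hQ => KL_blockAvg_le hr hP hQ)

theorem mul_log_div_blockAvg_le (hr : Equivalence r) {P : X → ℝ} (hP : ∀ x, 0 ≤ P x) {c : ℕ}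
    (hc : ∀ x, #(block r x) ≤ c) (x : X) :
    P x * log (P x / blockAvg r P x) ≤ P x * log c := by
  rcases (hP x).eq_or_lt with hx | hx
  · simp [← hx]
  · refine mul_le_mul_of_nonneg_left (log_le_log (div_pos hx (blockAvg_pos hr hP hx)) ?_) hx.le
    exact (div_blockAvg_le_card hr hP x).trans (by exact_mod_cast hc x)

theorem mul_log_div_blockAvg_eq_iff (hr : Equivalence r) {P : X → ℝ} (hP : ∀ x, 0 ≤ P x)
    {c : ℕ} (hc : ∀ x, #(block r x) ≤ c) {x : X} (hx : 0 < P x) :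
    P x * log (P x / blockAvg r P x) = P x * log c ↔
      #(block r x) = c ∧ P x = ∑ y ∈ block r x, P y := by
  have hratio := div_blockAvg_le_card hr hP x
  have hcx : (#(block r x) : ℝ) ≤ c := by exact_mod_cast hc x
  rw [mul_right_inj' hx.ne', ← div_blockAvg_eq_card_iff hr hP hx]
  rw [log_injOn_pos.eq_iff (div_pos hx (blockAvg_pos hr hP hx))
    ((card_block_pos hr x).trans_le hcx)]
  constructor
  · intro h
    have hcard : (#(block r x) : ℝ) = c := le_antisymm hcx (h ▸ hratio)
    exact ⟨by exact_mod_cast hcard, h.trans hcard.symm⟩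
  · rintro ⟨hcard, h⟩
    rw [h, hcard]

theorem sum_mul_log_div_blockAvg_eq_log_iff (hr : Equivalence r) {P : X → ℝ} (hP : IsProb P)
    {c : ℕ} (hc : ∀ x, #(block r x) ≤ c) :
    ∑ x, P x * log (P x / blockAvg r P x) = log c ↔
      ∀ x, 0 < P x → #(block r x) = c ∧ P x = ∑ y ∈ block r x, P y := by
  have hlog : ∑ x, P x * log c = log c := by rw [← sum_mul, hP.2, one_mul]
  rw [← hlog, sum_eq_sum_iff_of_le fun x _ => mul_log_div_blockAvg_le hr hP.1 hc x]
  refine ⟨fun h x hx => (mul_log_div_blockAvg_eq_iff hr hP.1 hc hx).1 (h x (mem_univ x)),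
    fun h x _ => ?_⟩
  rcases (hP.1 x).eq_or_lt with hx | hx
  · simp [← hx]
  · exact (mul_log_div_blockAvg_eq_iff hr hP.1 hc hx).2 (h x hx)

theorem eq_sum_block_iff (hr : Equivalence r) {P : X → ℝ} (hP : ∀ x, 0 ≤ P x) (x : X) :
    P x = ∑ y ∈ block r x, P y ↔ ∀ y, r x y → y ≠ x → P y = 0 := by
  rw [← add_sum_erase _ _ (mem_block.2 (hr.refl x)), left_eq_add,
    sum_eq_zero_iff_of_nonneg fun y _ => hP y]
  simp only [mem_erase, mem_block]
  exact ⟨fun h y hy hne => h y ⟨hne, hy⟩, fun h y hy => h y hy.2 hy.1⟩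

theorem exists_pos_of_sum_block_pos {P : X → ℝ} (hP : ∀ x, 0 ≤ P x) {x : X}
    (hx : 0 < ∑ y ∈ block r x, P y) : ∃ y, r x y ∧ 0 < P y := by
  obtain ⟨y, hy, hPy⟩ := (sum_pos_iff_of_nonneg fun y _ => hP y).1 hx
  exact ⟨y, mem_block.1 hy, hPy⟩

theorem forall_pos_eq_sum_block_iff (hr : Equivalence r) {P : X → ℝ} (hP : ∀ x, 0 ≤ P x)
    (c : ℕ) :
    (∀ x, 0 < P x → #(block r x) = c ∧ P x = ∑ y ∈ block r x, P y) ↔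
      (∀ x, 0 < ∑ y ∈ block r x, P y → #(block r x) = c) ∧
      (∀ x, 0 < ∑ y ∈ block r x, P y → ∃! z, r x z ∧ 0 < P z) := by
  constructor
  · intro h
    refine ⟨fun x hx => ?_, fun x hx => ?_⟩
    · obtain ⟨y, hxy, hy⟩ := exists_pos_of_sum_block_pos hP hx
      rw [block_eq_of_rel hr hxy]
      exact (h y hy).1
    · obtain ⟨y, hxy, hy⟩ := exists_pos_of_sum_block_pos hP hx
      refine ⟨y, ⟨hxy, hy⟩, fun z ⟨hxz, hz⟩ => ?_⟩
      by_contra hne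
      exact hz.ne' ((eq_sum_block_iff hr hP y).1 (h y hy).2 z (hr.trans (hr.symm hxy) hxz) hne)
  · rintro ⟨hcard, huniq⟩ x hx
    have hsum := hx.trans_le (le_sum_block hr hP x)
    refine ⟨hcard x hsum, (eq_sum_block_iff hr hP x).2 fun y hxy hne => ?_⟩
    by_contra hy
    obtain ⟨z, _, hz⟩ := huniq x hsum
    exact hne ((hz y ⟨hxy, (hP y).lt_of_ne' hy⟩).trans (hz x ⟨hr.refl x, hx⟩).symm)

end

theorem stmt5_general (X : Type*) [Fintype X]
    (r : X → X → Prop) (hr : Equivalence r) (c : ℕ)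
    (hc : IsGreatest {n : ℕ | ∃ x : X, ({y | r x y} : Set X).ncard = n} c)
    (P : X → ℝ) (hP : IsProb P) :
    (⨅ Q ∈ partModel r, KL P Q) = ((Real.log (c : ℝ) : ℝ) : EReal) ↔
      ((∀ x : X, 0 < ∑ y ∈ {y | r x y}.toFinset, P y → ({y | r x y} : Set X).ncard = c) ∧
       (∀ x : X, 0 < ∑ y ∈ {y | r x y}.toFinset, P y → ∃! z : X, r x z ∧ 0 < P z)) := by
  have hcard : ∀ x, (block r x).card ≤ c := fun x => hc.2 ⟨x, ncard_setOf_eq_card_block x⟩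
  simp only [toFinset_setOf_eq_block, ncard_setOf_eq_card_block]
  rw [iInf_KL_partModel hr hP, EReal.coe_eq_coe_iff,
    sum_mul_log_div_blockAvg_eq_log_iff hr hP hcard]
  exact forall_pos_eq_sum_block_iff hr hP.1 c

/-- characterization of the maximizers of the divergence from a
partition model of coarseness `c`. -/
theorem stmt5 (X : Type*) [Fintype X] [Nonempty X]
    (r : X → X → Prop) (hr : Equivalence r) (c : ℕ)
    (hc : IsGreatest {n : ℕ | ∃ x : X, ({y | r x y} : Set X).ncard = n} c)
    (P : X → ℝ) (hP : IsProb P) :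
    (⨅ Q ∈ partModel r, KL P Q) = ((Real.log (c : ℝ) : ℝ) : EReal) ↔
      ((∀ x : X, 0 < ∑ y ∈ {y | r x y}.toFinset, P y → ({y | r x y} : Set X).ncard = c) ∧
       (∀ x : X, 0 < ∑ y ∈ {y | r x y}.toFinset, P y → ∃! z : X, r x z ∧ 0 < P z)) :=
  stmt5_general X r hr c hc P hP
end

section
/- Let X' be a partition of a finite set X of coarseness c, with closed partition model M, and let Z be the union of all blocks of X' of cardinality c. Then for every Q ∈ M whose support is contained in Z there exists a probability distribution P on X such that D(P‖Q) = log c and D(P‖Q) ≤ D(P‖Q') for all Q' ∈ M; in particular inf_{Q'∈M} D(P‖Q') = log c and this infimum is attained at Q. -/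
open scoped BigOperators Classical

set_option maxHeartbeats 1600000 in
/-- every `Q` in the partition model supported on the union of the blocks
of maximal cardinality `c` is the rI-projection of a global maximizer of the divergence. -/
theorem stmt6 (X : Type*) [Fintype X] [Nonempty X]
    (r : X → X → Prop) (hr : Equivalence r) (c : ℕ)
    (hc : IsGreatest {n : ℕ | ∃ x : X, ({y | r x y} : Set X).ncard = n} c)
    (Z : Set X) (hZ : Z = {x : X | ({y | r x y} : Set X).ncard = c})
    (Q : X → ℝ) (hQ : Q ∈ partModel r) (hsupp : Function.support Q ⊆ Z) :
    ∃ P : X → ℝ, IsProb P ∧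
      KL P Q = ((Real.log (c : ℝ) : ℝ) : EReal) ∧
      (∀ Q' ∈ partModel r, KL P Q ≤ KL P Q') ∧
      (⨅ Q' ∈ partModel r, KL P Q') = ((Real.log (c : ℝ) : ℝ) : EReal) := by
  classical
  obtain ⟨⟨hQ0, hQsum⟩, hQconst⟩ := hQ
  set s : Setoid X := ⟨r, hr⟩ with hs
  set rep : X → X := fun x => (Quotient.mk s x).out with hrep
  set P : X → ℝ := fun x => if rep x = x then (c : ℝ) * Q x else 0 with hPdef
  -- basic facts about classes
  have hmk_eq : ∀ x y : X, Quotient.mk s x = Quotient.mk s y ↔ r x y := by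
    intro x y; exact Quotient.eq
  have hrep_fix : ∀ q : Quotient s, ∀ x : X, Quotient.mk s x = q → rep x = q.out := by
    intro q x hx; simp [hrep, hx]
  have hout : ∀ q : Quotient s, Quotient.mk s q.out = q := fun q => Quotient.out_eq q
  have hrep_out : ∀ q : Quotient s, rep q.out = q.out := by
    intro q; simp [hrep, hout q]
  set fib : Quotient s → Finset X := fun q => Finset.univ.filter (fun x => Quotient.mk s x = q)
    with hfib
  have hfib_mem : ∀ q x, x ∈ fib q ↔ Quotient.mk s x = q := by
    intro q x; simp [hfib]
  have hout_mem : ∀ q, q.out ∈ fib q := fun q => (hfib_mem q q.out).2 (hout q)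
  have hfib_card : ∀ q : Quotient s, (fib q).card = ({y | r q.out y} : Set X).ncard := by
    intro q
    have hset : ({y | r q.out y} : Set X) = (fib q : Set X) := by
      ext y
      simp only [Set.mem_setOf_eq, Finset.coe_filter, Finset.mem_univ, true_and, hfib,
        Set.mem_setOf_eq]
      constructor
      · intro h; rw [← hout q, hmk_eq]; exact hr.symm h
      · intro h
        have := (hmk_eq y q.out).1 (h.trans (hout q).symm)
        exact hr.symm this
    rw [hset, Set.ncard_coe_finset]
  have hcard_c : ∀ q : Quotient s, Q q.out ≠ 0 → (fib q).card = c := by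
    intro q hq
    have : q.out ∈ Z := hsupp hq
    rw [hZ] at this
    rw [hfib_card q]; exact this
  have hQfib : ∀ q : Quotient s, ∀ x ∈ fib q, Q x = Q q.out := by
    intro q x hx
    have : r q.out x := by
      rw [← hmk_eq, hout q]; exact ((hfib_mem q x).1 hx).symm
    exact (hQconst q.out x this).symm
  -- c ≥ 1
  have hc1 : 1 ≤ c := by
    obtain ⟨x⟩ := ‹Nonempty X›
    have hx : ({y | r x y} : Set X).ncard ∈ {n : ℕ | ∃ x : X, ({y | r x y} : Set X).ncard = n} :=
      ⟨x, rfl⟩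
    have hle := hc.2 hx
    have hpos : 0 < ({y | r x y} : Set X).ncard := by
      rw [Set.ncard_pos (Set.toFinite _)]
      exact ⟨x, hr.refl x⟩
    omega
  have hcpos : (0:ℝ) < (c:ℝ) := by exact_mod_cast Nat.lt_of_lt_of_le Nat.zero_lt_one hc1
  -- P basic facts
  have hP0 : ∀ x, 0 ≤ P x := by
    intro x; simp only [hPdef]
    split
    · exact mul_nonneg hcpos.le (hQ0 x)
    · exact le_refl 0
  have hPQ0 : ∀ x, Q x = 0 → P x = 0 := by
    intro x hx; simp [hPdef, hx]
  have hPne : ∀ x, P x ≠ 0 → rep x = x ∧ Q x ≠ 0 ∧ P x = (c:ℝ) * Q x := by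
    intro x hx
    by_cases h : rep x = x
    · refine ⟨h, ?_, by simp [hPdef, h]⟩
      intro h0; exact hx (hPQ0 x h0)
    · exact absurd (by simp [hPdef, h]) hx
  -- fiber sums
  have hfibsum : ∀ f : X → ℝ, ∑ q : Quotient s, ∑ x ∈ fib q, f x = ∑ x, f x := by
    intro f
    exact Finset.sum_fiberwise_of_maps_to (fun x _ => Finset.mem_univ _) f
  have hPfib : ∀ q : Quotient s, ∑ x ∈ fib q, P x = (c:ℝ) * Q q.out := by
    intro q
    have : ∀ x ∈ fib q, P x = if x = q.out then (c:ℝ) * Q q.out else 0 := by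
      intro x hx
      have hrx : rep x = q.out := hrep_fix q x ((hfib_mem q x).1 hx)
      by_cases h : x = q.out
      · subst h; simp [hPdef, hrep_out q]
      · have : rep x ≠ x := by rw [hrx]; exact fun hh => h hh.symm
        simp [hPdef, this, h]
    rw [Finset.sum_congr rfl this, Finset.sum_ite_eq' (fib q) q.out]
    simp [hout_mem q]
  have hQfibsum : ∀ q : Quotient s, ∑ x ∈ fib q, Q x = ((fib q).card : ℝ) * Q q.out := by
    intro q
    rw [Finset.sum_congr rfl (hQfib q), Finset.sum_const, nsmul_eq_mul]
  have hPsum : ∑ x, P x = 1 := by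
    rw [← hfibsum P]
    rw [← hQsum, ← hfibsum Q]
    refine Finset.sum_congr rfl fun q _ => ?_
    rw [hPfib q, hQfibsum q]
    by_cases h : Q q.out = 0
    · simp [h]
    · rw [hcard_c q h]
  have hProb : IsProb P := ⟨hP0, hPsum⟩
  -- KL P Q = log c
  have hKLQ : KL P Q = ((Real.log (c:ℝ) : ℝ) : EReal) := by
    rw [KL, if_pos hPQ0]
    norm_cast
    have : ∀ x, P x * Real.log (P x / Q x) = P x * Real.log (c:ℝ) := by
      intro x
      by_cases h : P x = 0
      · simp [h]
      · obtain ⟨_, hQx, hPx⟩ := hPne x h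
        have hratio : P x / Q x = (c:ℝ) := by
          rw [hPx, mul_div_assoc, div_self hQx, mul_one]
        rw [hratio]
    rw [Finset.sum_congr rfl (fun x _ => this x), ← Finset.sum_mul, hPsum, one_mul]
  -- KL P Q ≤ KL P Q' for Q' ∈ partModel
  have hmin : ∀ Q' ∈ partModel r, KL P Q ≤ KL P Q' := by
    intro Q' hQ'
    obtain ⟨⟨hQ'0, hQ'sum⟩, hQ'const⟩ := hQ'
    by_cases habs : ∀ x, Q' x = 0 → P x = 0
    · rw [hKLQ, KL, if_pos habs]
      norm_cast
      -- pointwise bound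
      set g : X → ℝ := fun x => if P x = 0 then 0 else (c:ℝ) * Q' x with hg
      have key : ∀ x, P x - g x + P x * Real.log (c:ℝ) ≤ P x * Real.log (P x / Q' x) := by
        intro x
        by_cases h : P x = 0
        · simp [h, hg]
        · obtain ⟨_, hQx, hPx⟩ := hPne x h
          have hQxpos : 0 < Q x := lt_of_le_of_ne (hQ0 x) (Ne.symm hQx)
          have hQ'x : Q' x ≠ 0 := fun h0 => h (habs x h0)
          have hQ'pos : 0 < Q' x := lt_of_le_of_ne (hQ'0 x) (Ne.symm hQ'x)
          have hPpos : 0 < P x := lt_of_le_of_ne (hP0 x) (Ne.symm h)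
          have hlog : Real.log (P x / Q' x) = Real.log (c:ℝ) + Real.log (Q x / Q' x) := by
            rw [hPx, mul_div_assoc, Real.log_mul hcpos.ne' (div_ne_zero hQx hQ'x)]
          have hlb : 1 - Q' x / Q x ≤ Real.log (Q x / Q' x) := by
            have := Real.log_le_sub_one_of_pos (div_pos hQ'pos hQxpos)
            have hinv : Real.log (Q x / Q' x) = - Real.log (Q' x / Q x) := by
              rw [← Real.log_inv, inv_div]
            linarith [hinv ▸ neg_le_neg this]
          have hgx : g x = (c:ℝ) * Q' x := by simp [hg, h]
          calc P x - g x + P x * Real.log (c:ℝ)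
              = P x * Real.log (c:ℝ) + P x * (1 - Q' x / Q x) := by
                rw [hgx, hPx]; field_simp; ring
            _ ≤ P x * Real.log (c:ℝ) + P x * Real.log (Q x / Q' x) := by
                have := mul_le_mul_of_nonneg_left hlb hPpos.le
                linarith
            _ = P x * Real.log (P x / Q' x) := by rw [hlog]; ring
      have hgle : ∑ x, g x ≤ 1 := by
        rw [← hQ'sum, ← hfibsum g, ← hfibsum Q']
        refine Finset.sum_le_sum fun q _ => ?_
        have hQ'fib : ∑ x ∈ fib q, Q' x = ((fib q).card : ℝ) * Q' q.out := by
          have : ∀ x ∈ fib q, Q' x = Q' q.out := by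
            intro x hx
            have : r q.out x := by rw [← hmk_eq, hout q]; exact ((hfib_mem q x).1 hx).symm
            exact (hQ'const q.out x this).symm
          rw [Finset.sum_congr rfl this, Finset.sum_const, nsmul_eq_mul]
        have hgfib : ∀ x ∈ fib q, g x = if x = q.out ∧ Q q.out ≠ 0 then (c:ℝ) * Q' q.out else 0 := by
          intro x hx
          have hrx : rep x = q.out := hrep_fix q x ((hfib_mem q x).1 hx)
          by_cases h : x = q.out ∧ Q q.out ≠ 0
          · obtain ⟨h1, h2⟩ := h
            have hPx : P x ≠ 0 := by
              subst h1
              simp only [hPdef, hrx, if_pos rfl]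
              exact mul_ne_zero hcpos.ne' h2
            have hgx : g x = (c:ℝ) * Q' x := if_neg hPx
            rw [hgx, if_pos ⟨h1, h2⟩, h1]
          · have hPx : P x = 0 := by
              by_contra hPx
              obtain ⟨hfix, hQx, _⟩ := hPne x hPx
              have hx_out : x = q.out := by rw [← hrx, hfix]
              exact h ⟨hx_out, by rwa [← hx_out]⟩
            simp [hg, hPx, h]
        rw [Finset.sum_congr rfl hgfib, hQ'fib]
        by_cases h : Q q.out ≠ 0
        · have hcond : ∀ x ∈ fib q,
              (if x = q.out ∧ Q q.out ≠ 0 then (c:ℝ) * Q' q.out else 0)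
                = (if x = q.out then (c:ℝ) * Q' q.out else 0) := by
            intro x _; simp [h]
          rw [Finset.sum_congr rfl hcond, Finset.sum_ite_eq' (fib q) q.out,
            if_pos (hout_mem q), hcard_c q h]
        · push_neg at h
          have : ∀ x ∈ fib q, (if x = q.out ∧ Q q.out ≠ 0 then (c:ℝ) * Q' q.out else 0) = 0 := by
            intro x hx; simp [h]
          rw [Finset.sum_congr rfl this, Finset.sum_const, smul_zero]
          exact mul_nonneg (Nat.cast_nonneg _) (hQ'0 _)
      calc Real.log (c:ℝ) = 1 - 1 + Real.log (c:ℝ) := by ring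
        _ ≤ ∑ x, P x - ∑ x, g x + (∑ x, P x) * Real.log (c:ℝ) := by
            rw [hPsum]; linarith
        _ = ∑ x, (P x - g x + P x * Real.log (c:ℝ)) := by
            rw [Finset.sum_add_distrib, Finset.sum_sub_distrib, Finset.sum_mul]
        _ ≤ ∑ x, P x * Real.log (P x / Q' x) := Finset.sum_le_sum fun x _ => key x
    · have htop : KL P Q' = ⊤ := by unfold KL; rw [if_neg habs]
      rw [htop]; exact le_top
  refine ⟨P, hProb, hKLQ, hmin, ?_⟩
  refine le_antisymm ?_ ?_
  · calc ⨅ Q' ∈ partModel r, KL P Q' ≤ KL P Q := iInf₂_le Q ⟨⟨hQ0, hQsum⟩, hQconst⟩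
      _ = _ := hKLQ
  · refine le_iInf₂ fun Q' hQ' => ?_
    rw [← hKLQ]; exact hmin Q' hQ'
end

section
/- Let X be a set of cardinality 3 and let u : X → ℝ be a function with ∑_{x∈X} u(x) = 0 and ∑_{x∈X} max(u(x),0) = 1, u ≠ 0. Then there exists exactly one subset E of the strictly positive probability distributions on X with the following two properties: (a) E is an exponential family whose normal space equals ℝ·u, i.e. there exists a strictly positive ν : X → (0,∞) with E = { P strictly positive probability distribution : ∑_{x∈X} u(x)·log(P(x)/ν(x)) = 0 }; and (b) sup_P inf_{Q∈E} D(P‖Q) = log 2. Moreover this unique E is obtained by taking ν(x) = |u(x)| for all x. -/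
open scoped BigOperators Classical

/-- The property of a set `E` of distributions on `X`: (a) `E` is an exponential
family whose normal space is `ℝ·u`, i.e. `E` is cut out from the strictly positive
probability distributions by `∑ u(x) log(P(x)/ν(x)) = 0` for some strictly positive
reference measure `ν`; (b) `sup_P inf_{Q ∈ E} D(P‖Q) = log 2`. -/
def Prop10 {X : Type*} [Fintype X] (u : X → ℝ) (E : Set (X → ℝ)) : Prop :=
  (∃ ν : X → ℝ, (∀ x, 0 < ν x) ∧
      E = {P : X → ℝ | (∀ x, 0 < P x) ∧ ∑ x, P x = 1 ∧
            ∑ x, u x * Real.log (P x / ν x) = 0}) ∧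
  maxDiv E = ((Real.log 2 : ℝ) : EReal)



section Aux
variable {X : Type*} [Fintype X]

lemma jensen_log (T : Finset X) (w y : X → ℝ) (hw : ∀ x ∈ T, 0 ≤ w x)
    (hw1 : ∑ x ∈ T, w x = 1) (hy : ∀ x ∈ T, w x ≠ 0 → 0 < y x) :
    ∑ x ∈ T, w x * Real.log (y x) ≤ Real.log (∑ x ∈ T, w x * y x) := by
  set M := ∑ x ∈ T, w x * y x with hM
  have hterm : ∀ x ∈ T, 0 ≤ w x * y x := by
    intro x hx
    rcases eq_or_ne (w x) 0 with h | h
    · simp [h]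
    · exact le_of_lt (mul_pos ((hw x hx).lt_of_ne (Ne.symm h)) (hy x hx h))
  obtain ⟨x₀, hx₀T, hx₀⟩ : ∃ x ∈ T, w x ≠ 0 := by
    apply Finset.exists_ne_zero_of_sum_ne_zero
    rw [hw1]; norm_num
  have hMpos : 0 < M := by
    have h1 : w x₀ * y x₀ ≤ M := Finset.single_le_sum hterm hx₀T
    have h2 : 0 < w x₀ * y x₀ :=
      mul_pos ((hw x₀ hx₀T).lt_of_ne (Ne.symm hx₀)) (hy x₀ hx₀T hx₀)
    linarith
  have key : ∑ x ∈ T, w x * (Real.log (y x) - Real.log M) ≤ 0 := by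
    have h1 : ∀ x ∈ T, w x * (Real.log (y x) - Real.log M) ≤ w x * y x / M - w x := by
      intro x hx
      rcases eq_or_ne (w x) 0 with h | h
      · simp [h]
      · have hyx := hy x hx h
        have hlog : Real.log (y x) - Real.log M = Real.log (y x / M) :=
          (Real.log_div (ne_of_gt hyx) (ne_of_gt hMpos)).symm
        have hle : Real.log (y x / M) ≤ y x / M - 1 :=
          Real.log_le_sub_one_of_pos (div_pos hyx hMpos)
        calc w x * (Real.log (y x) - Real.log M) = w x * Real.log (y x / M) := by rw [hlog]
          _ ≤ w x * (y x / M - 1) := mul_le_mul_of_nonneg_left hle (hw x hx)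
          _ = w x * y x / M - w x := by ring
    calc ∑ x ∈ T, w x * (Real.log (y x) - Real.log M)
        ≤ ∑ x ∈ T, (w x * y x / M - w x) := Finset.sum_le_sum h1
      _ = (∑ x ∈ T, w x * y x) / M - ∑ x ∈ T, w x := by
          rw [Finset.sum_sub_distrib, Finset.sum_div]
      _ = 0 := by rw [← hM, hw1, div_self (ne_of_gt hMpos)]; ring
  have expand : ∑ x ∈ T, w x * (Real.log (y x) - Real.log M)
      = (∑ x ∈ T, w x * Real.log (y x)) - Real.log M := by
    simp [mul_sub, Finset.sum_sub_distrib, ← Finset.sum_mul, hw1]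
  linarith [key, expand.symm.le]

set_option linter.unusedSectionVars false

lemma pos_part_sum (u : X → ℝ) (hnorm : ∑ x, max (u x) 0 = 1) :
    ∑ x ∈ Finset.univ.filter (fun x => 0 < u x), u x = 1 := by
  rw [← hnorm, Finset.sum_filter]
  apply Finset.sum_congr rfl
  intro x _
  rcases lt_trichotomy (u x) 0 with h | h | h
  · simp [not_lt.mpr h.le, max_eq_right h.le]
  · simp [h]
  · simp [h, max_eq_left h.le]

lemma neg_part_sum (u : X → ℝ) (hsum : ∑ x, u x = 0) (hnorm : ∑ x, max (u x) 0 = 1) :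
    ∑ x ∈ Finset.univ.filter (fun x => u x < 0), (-u x) = 1 := by
  have h : ∀ x : X, max (-u x) 0 = max (u x) 0 - u x := by
    intro x
    rcases le_total (u x) 0 with h | h
    · rw [max_eq_left (by linarith), max_eq_right h]; ring
    · rw [max_eq_right (by linarith), max_eq_left h]; ring
  have h2 : ∑ x, max (-u x) 0 = 1 := by
    simp only [h, Finset.sum_sub_distrib, hsum, hnorm, sub_zero]
  have := pos_part_sum (fun x => -u x) (by simpa using h2)
  simpa using this

/-- Split `∑ u log(Q/|u|)` into positive and negative parts. -/
lemma split_F (u Q : X → ℝ) :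
    ∑ x, u x * Real.log (Q x / |u x|)
      = (∑ x ∈ Finset.univ.filter (fun x => 0 < u x), u x * Real.log (Q x / u x))
        + ∑ x ∈ Finset.univ.filter (fun x => u x < 0), (-u x) * Real.log (-u x / Q x) := by
  rw [Finset.sum_filter, Finset.sum_filter, ← Finset.sum_add_distrib]
  apply Finset.sum_congr rfl
  intro x _
  rcases lt_trichotomy (u x) 0 with h | h | h
  · rw [abs_of_neg h, if_neg (not_lt.mpr h.le), if_pos h, zero_add]
    have : Real.log (-u x / Q x) = - Real.log (Q x / -u x) := by
      rw [← Real.log_inv, inv_div]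
    rw [this]; ring
  · simp [h]
  · rw [abs_of_pos h]
    simp [if_pos h, not_lt.mpr h.le]

/-- Core lower bound: for strictly positive `Q` with `∑ u log(Q/|u|) = δ`, the
divergence `D(u⁺‖Q)` is at least `log (1 + e^{-δ})`. -/
lemma dplus_bound (u : X → ℝ) (hsum : ∑ x, u x = 0) (hnorm : ∑ x, max (u x) 0 = 1)
    (Q : X → ℝ) (hQ : ∀ x, 0 < Q x) (hQ1 : ∑ x, Q x = 1) (δ : ℝ)
    (hδ : ∑ x, u x * Real.log (Q x / |u x|) = δ) :
    Real.log (1 + Real.exp (-δ)) ≤ ∑ x, max (u x) 0 * Real.log (max (u x) 0 / Q x) := by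
  classical
  set Pos := Finset.univ.filter (fun x => 0 < u x) with hPos
  set Neg := Finset.univ.filter (fun x => u x < 0) with hNeg
  have hPosSum : ∑ x ∈ Pos, u x = 1 := pos_part_sum u hnorm
  have hNegSum : ∑ x ∈ Neg, (-u x) = 1 := neg_part_sum u hsum hnorm
  set S := ∑ x ∈ Pos, Q x with hS
  set T := ∑ x ∈ Neg, Q x with hT
  have hPosNe : Pos.Nonempty := by
    rcases Finset.eq_empty_or_nonempty Pos with h | h
    · rw [h] at hPosSum; simp at hPosSum
    · exact h
  have hNegNe : Neg.Nonempty := by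
    rcases Finset.eq_empty_or_nonempty Neg with h | h
    · rw [h] at hNegSum; simp at hNegSum
    · exact h
  have hSpos : 0 < S := Finset.sum_pos (fun x _ => hQ x) hPosNe
  have hTpos : 0 < T := Finset.sum_pos (fun x _ => hQ x) hNegNe
  have hST : S + T ≤ 1 := by
    have hdisj : Disjoint Pos Neg := by
      rw [Finset.disjoint_left]
      intro x hx hx'
      rw [hPos, Finset.mem_filter] at hx
      rw [hNeg, Finset.mem_filter] at hx'
      linarith [hx.2, hx'.2]
    have : S + T = ∑ x ∈ Pos ∪ Neg, Q x := (Finset.sum_union hdisj).symm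
    rw [this, ← hQ1]
    exact Finset.sum_le_sum_of_subset_of_nonneg (Finset.subset_univ _)
      (fun x _ _ => (hQ x).le)
  have hT1S : T ≤ 1 - S := by linarith
  -- A = ∑_Pos u log(Q/u), B = ∑_Neg (-u) log(-u/Q)
  set A := ∑ x ∈ Pos, u x * Real.log (Q x / u x) with hA
  set B := ∑ x ∈ Neg, (-u x) * Real.log (-u x / Q x) with hB
  have hAB : A + B = δ := by rw [← hδ, split_F u Q]
  -- Jensen: A ≤ log S
  have hAle : A ≤ Real.log S := by
    have := jensen_log Pos u (fun x => Q x / u x)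
      (fun x hx => by rw [hPos, Finset.mem_filter] at hx; exact hx.2.le) hPosSum
      (fun x hx _ => by
        rw [hPos, Finset.mem_filter] at hx
        exact div_pos (hQ x) hx.2)
    have heq : ∑ x ∈ Pos, u x * (Q x / u x) = S := by
      apply Finset.sum_congr rfl
      intro x hx
      rw [hPos, Finset.mem_filter] at hx
      rw [mul_div_cancel₀ (Q x) (ne_of_gt hx.2)]
    rwa [heq] at this
  -- Jensen: -B ≤ log T
  have hBge : -Real.log T ≤ B := by
    have := jensen_log Neg (fun x => -u x) (fun x => Q x / (-u x))
      (fun x hx => by rw [hNeg, Finset.mem_filter] at hx; show (0:ℝ) ≤ -u x; linarith [hx.2]) hNegSum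
      (fun x hx _ => by
        rw [hNeg, Finset.mem_filter] at hx
        show (0:ℝ) < Q x / (-u x)
        exact div_pos (hQ x) (by linarith [hx.2]))
    have heq : ∑ x ∈ Neg, (-u x) * (Q x / (-u x)) = T := by
      apply Finset.sum_congr rfl
      intro x hx
      rw [hNeg, Finset.mem_filter] at hx
      show -u x * (Q x / -u x) = Q x
      rw [mul_div_cancel₀ (Q x) (by linarith [hx.2] : (-u x) ≠ 0)]
    rw [heq] at this
    have hflip : ∑ x ∈ Neg, (-u x) * Real.log (Q x / (-u x)) = -B := by
      rw [hB, ← Finset.sum_neg_distrib]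
      apply Finset.sum_congr rfl
      intro x hx
      have : Real.log (Q x / (-u x)) = - Real.log (-u x / Q x) := by
        rw [← Real.log_inv, inv_div]
      rw [this]; ring
    rw [hflip] at this
    linarith
  -- Goal sum equals -A
  have hgoal : ∑ x, max (u x) 0 * Real.log (max (u x) 0 / Q x) = -A := by
    rw [hA, ← Finset.sum_neg_distrib, Finset.sum_filter]
    apply Finset.sum_congr rfl
    intro x _
    rcases lt_or_ge 0 (u x) with h | h
    · rw [if_pos h, max_eq_left h.le]
      have : Real.log (u x / Q x) = - Real.log (Q x / u x) := by
        rw [← Real.log_inv, inv_div]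
      rw [this]; ring
    · rw [if_neg (not_lt.mpr h), max_eq_right h]; simp
  rw [hgoal]
  -- Two lower bounds for -A
  have hbound1 : -Real.log S ≤ -A := by linarith
  have hbound2 : -Real.log (1 - S) - δ ≤ -A := by
    have hlogT : Real.log T ≤ Real.log (1 - S) := Real.log_le_log hTpos hT1S
    linarith
  -- Case analysis
  set e := Real.exp (-δ) with he
  have hepos : 0 < e := Real.exp_pos _
  rcases le_or_gt S (1 / (1 + e)) with h | h
  · have h1 : Real.log S ≤ Real.log (1 / (1 + e)) := Real.log_le_log hSpos h
    rw [Real.log_div one_ne_zero (by positivity)] at h1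
    simp only [Real.log_one, zero_sub] at h1
    linarith
  · have h2 : 1 - S < e / (1 + e) := by
      rw [lt_div_iff₀ (by positivity)]
      have := (div_lt_iff₀ (by positivity : (0:ℝ) < 1 + e)).mp h
      nlinarith
    have hS1 : S < 1 := by
      have : T ≤ 1 - S := hT1S
      linarith
    have h3 : Real.log (1 - S) < Real.log (e / (1 + e)) :=
      Real.log_lt_log (by linarith) h2
    rw [Real.log_div (ne_of_gt hepos) (by positivity), he, Real.log_exp] at h3
    linarith


lemma negmax_sum (u : X → ℝ) (hsum : ∑ x, u x = 0) (hnorm : ∑ x, max (u x) 0 = 1) :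
    ∑ x, max (-u x) 0 = 1 := by
  have h : ∀ x : X, max (-u x) 0 = max (u x) 0 - u x := by
    intro x
    rcases le_total (u x) 0 with h | h
    · rw [max_eq_left (by linarith), max_eq_right h]; ring
    · rw [max_eq_right (by linarith), max_eq_left h]; ring
  simp only [h, Finset.sum_sub_distrib, hsum, hnorm, sub_zero]

lemma exists_Q (u : X → ℝ) (hsum : ∑ x, u x = 0) (hnorm : ∑ x, max (u x) 0 = 1)
    (P : X → ℝ) (hP0 : ∀ x, 0 ≤ P x) (hP1 : ∑ x, P x = 1)
    (κ : ℝ) (hκ : 0 < κ) (hκ1 : κ < 1) :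
    ∃ Q : X → ℝ, (∀ x, 0 < Q x) ∧ (∑ x, Q x = 1) ∧
      (∑ x, u x * Real.log (Q x / |u x|) = 0) ∧ ∀ x, (1 - κ) * P x ≤ 2 * Q x := by
  classical
  have hXne : Nonempty X := by
    rcases isEmpty_or_nonempty X with h | h
    · simp at hP1
    · exact h
  set n : ℝ := (Fintype.card X : ℝ) with hn
  have hnpos : 0 < n := by
    rw [hn]
    exact_mod_cast Fintype.card_pos
  set P' : X → ℝ := fun x => κ / n + (1 - κ) * P x with hP'
  clear_value P'
  have hP'pos : ∀ x, 0 < P' x := by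
    intro x
    have h1 : 0 < κ / n := div_pos hκ hnpos
    have h2 : 0 ≤ (1 - κ) * P x := mul_nonneg (by linarith) (hP0 x)
    simp only [hP']
    linarith
  have hP'1 : ∑ x, P' x = 1 := by
    have hconst : ∑ _x : X, κ / n = κ := by
      rw [Finset.sum_const, Finset.card_univ, nsmul_eq_mul, ← hn,
        mul_div_cancel₀ κ (ne_of_gt hnpos)]
    simp only [hP', Finset.sum_add_distrib, hconst, ← Finset.mul_sum, hP1]
    ring
  have hmaxsum : ∑ x, max (u x) 0 = 1 := hnorm
  have hnegsum : ∑ x, max (-u x) 0 = 1 := negmax_sum u hsum hnorm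
  set Qf : ℝ → X → ℝ :=
    fun s x => (P' x + s * max (u x) 0 + (1 - s) * max (-u x) 0) / 2 with hQf
  clear_value Qf
  have hQpos : ∀ s ∈ Set.Icc (0:ℝ) 1, ∀ x, 0 < Qf s x := by
    intro s hs x
    have h1 : 0 ≤ s * max (u x) 0 := mul_nonneg hs.1 (le_max_right _ _)
    have h2 : 0 ≤ (1 - s) * max (-u x) 0 :=
      mul_nonneg (by linarith [hs.2]) (le_max_right _ _)
    have h3 := hP'pos x
    simp only [hQf]
    linarith
  have hQsum : ∀ s : ℝ, ∑ x, Qf s x = 1 := by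
    intro s
    have h : ∑ x, (P' x + s * max (u x) 0 + (1 - s) * max (-u x) 0) = 2 := by
      simp only [Finset.sum_add_distrib, ← Finset.mul_sum, hP'1, hmaxsum, hnegsum]
      ring
    simp only [hQf, ← Finset.sum_div, h]
    norm_num
  set g : ℝ → ℝ := fun s => ∑ x, u x * Real.log (Qf s x / |u x|) with hg
  clear_value g
  set Pos := Finset.univ.filter (fun x => 0 < u x) with hPosd
  set Neg := Finset.univ.filter (fun x => u x < 0) with hNegd
  have hPosSum : ∑ x ∈ Pos, u x = 1 := pos_part_sum u hnorm
  have hNegSum : ∑ x ∈ Neg, (-u x) = 1 := neg_part_sum u hsum hnorm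
  have hPosNe : Pos.Nonempty := by
    rcases Finset.eq_empty_or_nonempty Pos with h | h
    · rw [h] at hPosSum; simp at hPosSum
    · exact h
  have hNegNe : Neg.Nonempty := by
    rcases Finset.eq_empty_or_nonempty Neg with h | h
    · rw [h] at hNegSum; simp at hNegSum
    · exact h
  have hsubsum : ∀ F : Finset X, ∑ x ∈ F, P' x / 2 ≤ 1 / 2 := by
    intro F
    have h1 : ∑ x ∈ F, P' x ≤ 1 := by
      rw [← hP'1]
      exact Finset.sum_le_sum_of_subset_of_nonneg (Finset.subset_univ _)
        (fun x _ _ => (hP'pos x).le)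
    rw [← Finset.sum_div]
    linarith
  have hhalf : Real.log (1/2) = - Real.log 2 := by rw [one_div, Real.log_inv]
  -- g 0 ≤ 0
  have hg0 : g 0 ≤ 0 := by
    have hA : ∑ x ∈ Pos, u x * Real.log (Qf 0 x / u x) ≤ Real.log (1/2) := by
      have hA1 : ∀ x ∈ Pos, Qf 0 x = P' x / 2 := by
        intro x hx
        rw [hPosd, Finset.mem_filter] at hx
        have h2 : max (-u x) 0 = 0 := max_eq_right (by linarith [hx.2])
        simp only [hQf, h2]
        ring
      have hjen := jensen_log Pos u (fun x => (P' x / 2) / u x)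
        (fun x hx => by rw [hPosd, Finset.mem_filter] at hx; exact hx.2.le) hPosSum
        (fun x hx _ => by
          rw [hPosd, Finset.mem_filter] at hx
          show (0:ℝ) < (P' x / 2) / u x
          exact div_pos (by linarith [hP'pos x]) hx.2)
      have heq : ∑ x ∈ Pos, u x * ((P' x / 2) / u x) = ∑ x ∈ Pos, P' x / 2 := by
        apply Finset.sum_congr rfl
        intro x hx
        rw [hPosd, Finset.mem_filter] at hx
        rw [mul_div_cancel₀ _ (ne_of_gt hx.2)]
      rw [heq] at hjen
      have hpp : (0:ℝ) < ∑ x ∈ Pos, P' x / 2 :=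
        Finset.sum_pos (fun x _ => by have := hP'pos x; linarith) hPosNe
      calc ∑ x ∈ Pos, u x * Real.log (Qf 0 x / u x)
          = ∑ x ∈ Pos, u x * Real.log ((P' x / 2) / u x) := by
            apply Finset.sum_congr rfl
            intro x hx
            rw [hA1 x hx]
        _ ≤ Real.log (∑ x ∈ Pos, P' x / 2) := hjen
        _ ≤ Real.log (1/2) := Real.log_le_log hpp (hsubsum Pos)
    have hB : ∑ x ∈ Neg, (-u x) * Real.log (-u x / Qf 0 x) ≤ Real.log 2 := by
      have h1 : ∀ x ∈ Neg, (-u x) * Real.log (-u x / Qf 0 x) ≤ (-u x) * Real.log 2 := by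
        intro x hx
        rw [hNegd, Finset.mem_filter] at hx
        have hux : 0 < -u x := by linarith [hx.2]
        have hq := hQpos 0 (by norm_num) x
        have h2 : -u x / Qf 0 x ≤ 2 := by
          rw [div_le_iff₀ hq]
          have h3 : max (-u x) 0 = -u x := max_eq_left hux.le
          have h4 := hP'pos x
          simp only [hQf, h3]
          nlinarith
        apply mul_le_mul_of_nonneg_left _ hux.le
        exact Real.log_le_log (div_pos hux hq) h2
      calc ∑ x ∈ Neg, (-u x) * Real.log (-u x / Qf 0 x)
          ≤ ∑ x ∈ Neg, (-u x) * Real.log 2 := Finset.sum_le_sum h1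
        _ = Real.log 2 := by rw [← Finset.sum_mul, hNegSum, one_mul]
    have hsplit : g 0 = (∑ x ∈ Pos, u x * Real.log (Qf 0 x / u x))
        + ∑ x ∈ Neg, (-u x) * Real.log (-u x / Qf 0 x) := by
      simp only [hg]; exact split_F u (Qf 0)
    rw [hsplit]
    linarith
  -- 0 ≤ g 1
  have hg1 : 0 ≤ g 1 := by
    have hA : - Real.log 2 ≤ ∑ x ∈ Pos, u x * Real.log (Qf 1 x / u x) := by
      have h1 : ∀ x ∈ Pos, u x * Real.log (1/2) ≤ u x * Real.log (Qf 1 x / u x) := by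
        intro x hx
        rw [hPosd, Finset.mem_filter] at hx
        have hq := hQpos 1 (by norm_num) x
        have h2 : (1:ℝ)/2 ≤ Qf 1 x / u x := by
          rw [le_div_iff₀ hx.2]
          have h3 : max (u x) 0 = u x := max_eq_left hx.2.le
          have h4 := hP'pos x
          simp only [hQf, h3]
          nlinarith
        apply mul_le_mul_of_nonneg_left _ hx.2.le
        exact Real.log_le_log (by norm_num) h2
      calc (- Real.log 2 : ℝ) = ∑ x ∈ Pos, u x * Real.log (1/2) := by
            rw [← Finset.sum_mul, hPosSum, one_mul, hhalf]
        _ ≤ _ := Finset.sum_le_sum h1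
    have hB : Real.log 2 ≤ ∑ x ∈ Neg, (-u x) * Real.log (-u x / Qf 1 x) := by
      have hB1 : ∀ x ∈ Neg, Qf 1 x = P' x / 2 := by
        intro x hx
        rw [hNegd, Finset.mem_filter] at hx
        have h2 : max (u x) 0 = 0 := max_eq_right hx.2.le
        simp only [hQf, h2]
        ring
      have hjen := jensen_log Neg (fun x => -u x) (fun x => (P' x / 2) / (-u x))
        (fun x hx => by
          rw [hNegd, Finset.mem_filter] at hx
          show (0:ℝ) ≤ -u x; linarith [hx.2]) hNegSum
        (fun x hx _ => by
          rw [hNegd, Finset.mem_filter] at hx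
          show (0:ℝ) < (P' x / 2) / (-u x)
          exact div_pos (by linarith [hP'pos x]) (by linarith [hx.2]))
      have heq : ∑ x ∈ Neg, (-u x) * ((P' x / 2) / (-u x)) = ∑ x ∈ Neg, P' x / 2 := by
        apply Finset.sum_congr rfl
        intro x hx
        rw [hNegd, Finset.mem_filter] at hx
        rw [mul_div_cancel₀ _ (by intro h; rw [neg_eq_zero] at h; exact absurd h (ne_of_lt hx.2) : (-u x) ≠ 0)]
      rw [heq] at hjen
      have hpp : (0:ℝ) < ∑ x ∈ Neg, P' x / 2 :=
        Finset.sum_pos (fun x _ => by have := hP'pos x; linarith) hNegNe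
      have hflip : ∑ x ∈ Neg, (-u x) * Real.log ((P' x / 2) / (-u x))
          = - ∑ x ∈ Neg, (-u x) * Real.log (-u x / (P' x / 2)) := by
        rw [← Finset.sum_neg_distrib]
        apply Finset.sum_congr rfl
        intro x _
        have : Real.log ((P' x / 2) / (-u x)) = - Real.log (-u x / (P' x / 2)) := by
          rw [← Real.log_inv, inv_div]
        rw [this]; ring
      rw [hflip] at hjen
      have hlog : Real.log (∑ x ∈ Neg, P' x / 2) ≤ Real.log (1/2) :=
        Real.log_le_log hpp (hsubsum Neg)
      have hfin : - Real.log (1/2) ≤ ∑ x ∈ Neg, (-u x) * Real.log (-u x / (P' x / 2)) := by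
        linarith
      rw [hhalf] at hfin
      calc Real.log 2 = - - Real.log 2 := by ring
        _ ≤ ∑ x ∈ Neg, (-u x) * Real.log (-u x / (P' x / 2)) := by linarith
        _ = ∑ x ∈ Neg, (-u x) * Real.log (-u x / Qf 1 x) := by
            apply Finset.sum_congr rfl
            intro x hx
            rw [hB1 x hx]
    have hsplit : g 1 = (∑ x ∈ Pos, u x * Real.log (Qf 1 x / u x))
        + ∑ x ∈ Neg, (-u x) * Real.log (-u x / Qf 1 x) := by
      simp only [hg]; exact split_F u (Qf 1)
    rw [hsplit]
    linarith
  -- continuity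
  have hgc : ContinuousOn g (Set.Icc (0:ℝ) 1) := by
    rw [hg]
    apply continuousOn_finset_sum
    intro x _
    rcases eq_or_ne (u x) 0 with hux | hux
    · simp only [hux, zero_mul]
      exact continuousOn_const
    · simp only [hQf]
      apply ContinuousOn.mul continuousOn_const
      apply ContinuousOn.log
      · have hc : Continuous fun s : ℝ =>
            ((P' x + s * max (u x) 0 + (1 - s) * max (-u x) 0) / 2) / |u x| := by
          apply Continuous.div_const
          apply Continuous.div_const
          exact ((continuous_const.add (continuous_id.mul continuous_const)).add
            ((continuous_const.sub continuous_id).mul continuous_const))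
        exact hc.continuousOn
      · intro s hs
        have hp := hQpos s hs x
        simp only [hQf] at hp
        exact ne_of_gt (div_pos hp (abs_pos.mpr hux))
  obtain ⟨s, hsmem, hgs⟩ :=
    intermediate_value_Icc (by norm_num : (0:ℝ) ≤ 1) hgc ⟨hg0, hg1⟩
  simp only [hg] at hgs
  refine ⟨Qf s, hQpos s hsmem, hQsum s, hgs, ?_⟩
  intro x
  have h1 : 0 ≤ s * max (u x) 0 := mul_nonneg hsmem.1 (le_max_right _ _)
  have h2 : 0 ≤ (1 - s) * max (-u x) 0 :=
    mul_nonneg (by linarith [hsmem.2]) (le_max_right _ _)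
  have h3 : P' x ≤ 2 * Qf s x := by
    simp only [hQf]
    linarith
  have h4 : (1 - κ) * P x ≤ P' x := by
    have h5 : 0 < κ / n := div_pos hκ hnpos
    simp only [hP']
    linarith
  linarith

lemma KL_pos_den (P Q : X → ℝ) (hQ : ∀ x, 0 < Q x) :
    KL P Q = ((∑ x, P x * Real.log (P x / Q x) : ℝ) : EReal) := by
  rw [KL, if_pos (fun x hx => absurd hx (ne_of_gt (hQ x)))]

lemma ref_change (u ν P : X → ℝ) (hν : ∀ x, 0 < ν x) (hP : ∀ x, 0 < P x) :
    ∑ x, u x * Real.log (P x / ν x)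
      = (∑ x, u x * Real.log (P x / |u x|)) - ∑ x, u x * Real.log (ν x / |u x|) := by
  rw [← Finset.sum_sub_distrib]
  apply Finset.sum_congr rfl
  intro x _
  rcases eq_or_ne (u x) 0 with h | h
  · simp [h]
  · have h1 : Real.log (P x / ν x) = Real.log (P x) - Real.log (ν x) :=
      Real.log_div (ne_of_gt (hP x)) (ne_of_gt (hν x))
    have h2 : Real.log (P x / |u x|) = Real.log (P x) - Real.log |u x| :=
      Real.log_div (ne_of_gt (hP x)) (abs_ne_zero.mpr h)
    have h3 : Real.log (ν x / |u x|) = Real.log (ν x) - Real.log |u x| :=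
      Real.log_div (ne_of_gt (hν x)) (abs_ne_zero.mpr h)
    rw [h1, h2, h3]; ring

lemma maxdiv_ge_aux (u : X → ℝ) (hsum : ∑ x, u x = 0) (hnorm : ∑ x, max (u x) 0 = 1)
    (E : Set (X → ℝ)) (δ : ℝ)
    (hE : ∀ Q ∈ E, (∀ x, 0 < Q x) ∧ (∑ x, Q x = 1) ∧
        ∑ x, u x * Real.log (Q x / |u x|) = δ) :
    ((Real.log (1 + Real.exp (-δ)) : ℝ) : EReal) ≤ maxDiv E := by
  unfold maxDiv
  apply le_iSup₂_of_le (fun x => max (u x) 0)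
    (show (fun x => max (u x) 0) ∈ {P : X → ℝ | IsProb P} from
      ⟨fun x => le_max_right _ _, hnorm⟩)
  apply le_iInf₂
  intro Q hQ
  obtain ⟨hq, hq1, hqF⟩ := hE Q hQ
  rw [KL_pos_den _ _ hq]
  exact_mod_cast dplus_bound u hsum hnorm Q hq hq1 δ hqF

lemma ereal_le_of_forall (a : EReal) (b : ℝ)
    (h : ∀ ε : ℝ, 0 < ε → a ≤ ((b + ε : ℝ) : EReal)) :
    a ≤ (b : EReal) := by
  induction a using EReal.rec with
  | bot => exact bot_le
  | coe r =>
    rw [EReal.coe_le_coe_iff]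
    by_contra hc
    push_neg at hc
    have h2 := h ((r - b) / 2) (by linarith)
    rw [EReal.coe_le_coe_iff] at h2
    linarith
  | top =>
    have h2 := h 1 one_pos
    exact absurd (top_le_iff.mp h2) (EReal.coe_ne_top _)

/-- `maxDiv` of the family with reference measure `|u|` equals `log 2`. -/
lemma maxdiv_E0 (u : X → ℝ) (hsum : ∑ x, u x = 0) (hnorm : ∑ x, max (u x) 0 = 1) :
    maxDiv {P : X → ℝ | (∀ x, 0 < P x) ∧ ∑ x, P x = 1 ∧
        ∑ x, u x * Real.log (P x / |u x|) = 0} = ((Real.log 2 : ℝ) : EReal) := by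
  set E₀ : Set (X → ℝ) := {P : X → ℝ | (∀ x, 0 < P x) ∧ ∑ x, P x = 1 ∧
      ∑ x, u x * Real.log (P x / |u x|) = 0} with hE₀
  apply le_antisymm
  · -- upper bound
    unfold maxDiv
    apply iSup₂_le
    intro P hP
    obtain ⟨hP0, hP1⟩ := hP
    apply ereal_le_of_forall
    intro ε hε
    have hexp : Real.exp (-ε) < 1 := Real.exp_lt_one_iff.mpr (by linarith)
    have hexp0 : 0 < Real.exp (-ε) := Real.exp_pos _
    obtain ⟨Q, hQpos, hQ1, hQF, hQge⟩ :=
      exists_Q u hsum hnorm P hP0 hP1 (1 - Real.exp (-ε)) (by linarith) (by linarith)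
    have hmem : Q ∈ E₀ := ⟨hQpos, hQ1, hQF⟩
    apply iInf₂_le_of_le Q hmem
    rw [KL_pos_den P Q hQpos, EReal.coe_le_coe_iff]
    have h1 : ∀ x, P x * Real.log (P x / Q x) ≤ P x * (Real.log 2 + ε) := by
      intro x
      rcases eq_or_lt_of_le (hP0 x) with h | h
      · rw [← h]; simp
      · have hq := hQpos x
        have hle : P x / Q x ≤ 2 / Real.exp (-ε) := by
          rw [div_le_div_iff₀ hq hexp0]
          have h2 := hQge x
          have h3 : 1 - (1 - Real.exp (-ε)) = Real.exp (-ε) := by ring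
          rw [h3] at h2
          linarith
        have hlog : Real.log (P x / Q x) ≤ Real.log 2 + ε := by
          have h4 := Real.log_le_log (div_pos h hq) hle
          rwa [Real.log_div two_ne_zero (ne_of_gt hexp0), Real.log_exp,
            sub_neg_eq_add] at h4
        exact mul_le_mul_of_nonneg_left hlog h.le
    calc ∑ x, P x * Real.log (P x / Q x)
        ≤ ∑ x, P x * (Real.log 2 + ε) := Finset.sum_le_sum (fun x _ => h1 x)
      _ = Real.log 2 + ε := by rw [← Finset.sum_mul, hP1, one_mul]
  · -- lower bound
    have h0 := maxdiv_ge_aux u hsum hnorm E₀ 0 (fun Q hQ => hQ)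
    have h2 : Real.log (1 + Real.exp (-(0:ℝ))) = Real.log 2 := by norm_num
    rwa [h2] at h0
end Aux


/-- on a three-element set, for each `u` with `∑ u = 0`,
`∑ max(u,0) = 1`, `u ≠ 0` there is exactly one exponential family with normal space
`ℝ·u` and maximal divergence `log 2`, and it is obtained by taking `ν = |u|`. -/
theorem stmt10 (X : Type*) [Fintype X] (hX : Fintype.card X = 3)
    (u : X → ℝ) (hsum : ∑ x, u x = 0) (hnorm : ∑ x, max (u x) 0 = 1) (hu : u ≠ 0) :
    (∃! E : Set (X → ℝ), Prop10 u E) ∧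
    Prop10 u {P : X → ℝ | (∀ x, 0 < P x) ∧ ∑ x, P x = 1 ∧
      ∑ x, u x * Real.log (P x / |u x|) = 0} := by
  classical
  set E₀ : Set (X → ℝ) := {P : X → ℝ | (∀ x, 0 < P x) ∧ ∑ x, P x = 1 ∧
      ∑ x, u x * Real.log (P x / |u x|) = 0} with hE₀
  have hmd : maxDiv E₀ = ((Real.log 2 : ℝ) : EReal) := maxdiv_E0 u hsum hnorm
  have hprop : Prop10 u E₀ := by
    constructor
    · refine ⟨fun x => if u x = 0 then 1 else |u x|, ?_, ?_⟩
      · intro x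
        by_cases h : u x = 0
        · simp [h]
        · simp [h, abs_pos.mpr h]
      · rw [hE₀]
        ext P
        simp only [Set.mem_setOf_eq]
        have hcong : ∑ x, u x * Real.log (P x / (if u x = 0 then 1 else |u x|))
            = ∑ x, u x * Real.log (P x / |u x|) := by
          apply Finset.sum_congr rfl
          intro x _
          by_cases h : u x = 0
          · simp [h]
          · simp [h]
        constructor
        · rintro ⟨a, b, c⟩
          exact ⟨a, b, hcong.trans c⟩
        · rintro ⟨a, b, c⟩
          exact ⟨a, b, hcong.symm.trans c⟩
    · exact hmd
  have huniq : ∀ E : Set (X → ℝ), Prop10 u E → E = E₀ := by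
    intro E hE
    obtain ⟨⟨ν, hν, hEset⟩, hEmd⟩ := hE
    set δ : ℝ := ∑ x, u x * Real.log (ν x / |u x|) with hδdef
    have hEδ : ∀ Q ∈ E, (∀ x, 0 < Q x) ∧ (∑ x, Q x = 1) ∧
        ∑ x, u x * Real.log (Q x / |u x|) = δ := by
      intro Q hQ
      rw [hEset] at hQ
      obtain ⟨a, b, c⟩ := hQ
      refine ⟨a, b, ?_⟩
      have h5 := ref_change u ν Q hν a
      rw [c] at h5
      rw [hδdef]
      linarith [h5]
    have h1 : Real.log (1 + Real.exp (-δ)) ≤ Real.log 2 := by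
      have h6 := maxdiv_ge_aux u hsum hnorm E δ hEδ
      rw [hEmd] at h6
      exact_mod_cast h6
    have h2 : Real.log (1 + Real.exp δ) ≤ Real.log 2 := by
      have hsum' : ∑ x, (-u x) = 0 := by rw [Finset.sum_neg_distrib, hsum, neg_zero]
      have hnorm' : ∑ x, max (-u x) 0 = 1 := negmax_sum u hsum hnorm
      have hEδ' : ∀ Q ∈ E, (∀ x, 0 < Q x) ∧ (∑ x, Q x = 1) ∧
          ∑ x, (-u x) * Real.log (Q x / |(-u x)|) = -δ := by
        intro Q hQ
        obtain ⟨a, b, c⟩ := hEδ Q hQ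
        refine ⟨a, b, ?_⟩
        have h7 : ∑ x, (-u x) * Real.log (Q x / |(-u x)|)
            = - ∑ x, u x * Real.log (Q x / |u x|) := by
          rw [← Finset.sum_neg_distrib]
          apply Finset.sum_congr rfl
          intro x _
          rw [abs_neg]
          ring
        rw [h7, c]
      have h8 := maxdiv_ge_aux (fun x => -u x) hsum' hnorm' E (-δ) hEδ'
      rw [hEmd, neg_neg] at h8
      exact_mod_cast h8
    have hb1 : (0:ℝ) < 1 + Real.exp (-δ) := by positivity
    have hb2 : (0:ℝ) < 1 + Real.exp δ := by positivity
    have e1 : 1 + Real.exp (-δ) ≤ 2 := by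
      rwa [Real.log_le_log_iff hb1 (by norm_num)] at h1
    have e2 : 1 + Real.exp δ ≤ 2 := by
      rwa [Real.log_le_log_iff hb2 (by norm_num)] at h2
    have d1 : -δ ≤ 0 := by
      have := Real.exp_le_one_iff.mp (by linarith : Real.exp (-δ) ≤ 1)
      linarith
    have d2 : δ ≤ 0 := Real.exp_le_one_iff.mp (by linarith : Real.exp δ ≤ 1)
    have hδ0 : δ = 0 := by linarith
    -- now E = E₀
    ext Q
    constructor
    · intro hQ
      obtain ⟨a, b, c⟩ := hEδ Q hQ
      rw [hδ0] at c
      exact ⟨a, b, c⟩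
    · intro hQ
      obtain ⟨a, b, c⟩ := hQ
      rw [hEset]
      refine ⟨a, b, ?_⟩
      have h5 := ref_change u ν Q hν a
      rw [c] at h5
      rw [h5, ← hδdef, hδ0]
      ring
  exact ⟨⟨E₀, hprop, huniq⟩, hprop⟩
end
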